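/- arXiv:2407.03692 — 11 statements merged into one kernel-verified Lean document; each statement's English description precedes it below -/
import Mathlib

section
/- Every rational number p/q with p, q coprime integers and p > q > 0 admits a unique negative continued fraction expansion with all entries at least 2; that is, there exist a unique n ≥ 1 and unique integers a_1, …, a_n with each a_i ≥ 2 such that K(a_1,…,a_n) = p and K(a_2,…,a_n) = q (equivalently, p/q = [a_1,…,a_n]^-). -/
/-!
Existence is the negative Euclidean algorithm: for `p > q > 1` coprime, take
`a = ⌊p / q⌋ + 1` and `r = a q - p`; then `0 < r < q` (`r ≠ q` because `q ∤ p`), `q, r` are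
coprime, and prepending `a` to the expansion of `q / r` gives one of `p / q`.

Uniqueness rests on the fact that the continuants of a string with entries `≥ 2` strictly
increase as entries are prepended, starting from `K() = 1`. Hence the tail of the string is empty
exactly when `q = 1`, and otherwise `p = a q - r` with `0 < r = K(a₃,…,aₙ) < q`, which determines
`a = a₁` and `r`, so one can recurse on `(q, r)`.
-/

/-- The negative continuant `K(a₁,…,aₙ)`, defined by `K() = 1`, `K(a) = a`, and
`K(a₁,a₂,…,aₙ) = a₁·K(a₂,…,aₙ) − K(a₃,…,aₙ)`.  The negative continued fraction
`[a₁,…,aₙ]⁻` equals `K(a₁,…,aₙ)/K(a₂,…,aₙ)`. -/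
def negCont : List ℤ → ℤ
  | [] => 1
  | [a] => a
  | a :: b :: l => a * negCont (b :: l) - negCont l

theorem one_le_negCont_and_negCont_lt_cons {l : List ℤ} (hl : ∀ x ∈ l, 2 ≤ x) {a : ℤ}
    (ha : 2 ≤ a) : 1 ≤ negCont l ∧ negCont l < negCont (a :: l) := by
  induction l generalizing a with
  | nil => simp only [negCont]; omega
  | cons b l ih =>
    obtain ⟨hl1, hlb⟩ :=
      ih (fun x hx => hl x (List.mem_cons_of_mem b hx)) (hl b List.mem_cons_self)
    have hK : negCont (a :: b :: l) = a * negCont (b :: l) - negCont l := rfl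
    constructor <;> nlinarith

theorem one_le_negCont {l : List ℤ} (hl : ∀ x ∈ l, 2 ≤ x) : 1 ≤ negCont l :=
  (one_le_negCont_and_negCont_lt_cons hl le_rfl).1

theorem negCont_lt_negCont_cons {l : List ℤ} (hl : ∀ x ∈ l, 2 ≤ x) {a : ℤ} (ha : 2 ≤ a) :
    negCont l < negCont (a :: l) :=
  (one_le_negCont_and_negCont_lt_cons hl ha).2

theorem negCont_eq_one_iff {l : List ℤ} (hl : ∀ x ∈ l, 2 ≤ x) : negCont l = 1 ↔ l = [] := by
  refine ⟨fun h => ?_, fun h => h ▸ rfl⟩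
  cases l with
  | nil => rfl
  | cons a l =>
    have hl' : ∀ x ∈ l, 2 ≤ x := fun x hx => hl x (List.mem_cons_of_mem a hx)
    have := negCont_lt_negCont_cons hl' (hl a List.mem_cons_self)
    have := one_le_negCont hl'
    omega

theorem eq_and_eq_of_mul_sub_eq_mul_sub {a b q r s : ℤ} (hr : 0 ≤ r) (hrq : r < q) (hs : 0 ≤ s)
    (hsq : s < q) (h : a * q - r = b * q - s) : a = b ∧ r = s := by
  have hdvd : q ∣ r - s := ⟨a - b, by linarith⟩
  have hrs : r - s = 0 := Int.eq_zero_of_abs_lt_dvd hdvd (abs_sub_lt_iff.2 ⟨by omega, by omega⟩)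
  exact ⟨mul_right_cancel₀ (by omega : q ≠ 0) (by linarith), by linarith⟩

theorem eq_and_negCont_tail_eq_of_negCont_cons_eq {a b : ℤ} {l m : List ℤ}
    (hl : ∀ x ∈ a :: l, 2 ≤ x) (hm : ∀ x ∈ b :: m, 2 ≤ x)
    (h : negCont (a :: l) = negCont (b :: m)) (ht : negCont l = negCont m) :
    a = b ∧ negCont l.tail = negCont m.tail := by
  obtain ⟨-, hl⟩ := List.forall_mem_cons.1 hl
  obtain ⟨-, hm⟩ := List.forall_mem_cons.1 hm
  match l, m with
  | [], [] => exact ⟨h, rfl⟩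
  | [], _ :: _ => exact absurd ((negCont_eq_one_iff hm).1 ht.symm) (List.cons_ne_nil _ _)
  | _ :: _, [] => exact absurd ((negCont_eq_one_iff hl).1 ht) (List.cons_ne_nil _ _)
  | c :: l, d :: m =>
    obtain ⟨hc, hl⟩ := List.forall_mem_cons.1 hl
    obtain ⟨hd, hm⟩ := List.forall_mem_cons.1 hm
    have hlt := negCont_lt_negCont_cons hl hc
    have hmt := negCont_lt_negCont_cons hm hd
    simp only [negCont] at h
    rw [ht] at h hlt
    simp only [List.tail_cons]
    exact eq_and_eq_of_mul_sub_eq_mul_sub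
      (by linarith [one_le_negCont hl]) hlt (by linarith [one_le_negCont hm]) hmt h

theorem eq_of_negCont_eq {l m : List ℤ} (hl : ∀ x ∈ l, 2 ≤ x) (hm : ∀ x ∈ m, 2 ≤ x)
    (h : negCont l = negCont m) (ht : negCont l.tail = negCont m.tail) : l = m := by
  induction l generalizing m with
  | nil => exact ((negCont_eq_one_iff hm).1 h.symm).symm
  | cons a l ih =>
    cases m with
    | nil => exact absurd ((negCont_eq_one_iff hl).1 h) (List.cons_ne_nil a l)
    | cons b m =>
      obtain ⟨rfl, htt⟩ := eq_and_negCont_tail_eq_of_negCont_cons_eq hl hm h ht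
      rw [ih (List.forall_mem_cons.1 hl).2 (List.forall_mem_cons.1 hm).2 ht htt]

theorem exists_negCont_eq (p q : ℤ) (hco : IsCoprime p q) (hqp : q < p) (hq : 0 < q) :
    ∃ L : List ℤ, (∀ a ∈ L, 2 ≤ a) ∧ negCont L = p ∧ negCont L.tail = q := by
  obtain rfl | hq1 := eq_or_ne q 1
  · exact ⟨[p], by simp only [List.mem_singleton, forall_eq]; omega, rfl, rfl⟩
  have hndvd : ¬ q ∣ p := fun hdvd => by
    have := Int.isUnit_iff.1 (hco.isUnit_of_dvd' hdvd dvd_rfl)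
    omega
  obtain ⟨r, hr⟩ : ∃ r, r = (p / q + 1) * q - p := ⟨_, rfl⟩
  have hr_eq : r = q - p % q := by linarith [Int.mul_ediv_add_emod p q]
  have hr_lt : r < q := by
    have := Int.emod_nonneg p hq.ne'
    have := fun h => hndvd (Int.dvd_of_emod_eq_zero h)
    omega
  have hr_pos : 0 < r := by linarith [Int.emod_lt_of_pos p hq]
  obtain ⟨L, hL2, hLq, hLr⟩ :=
    exists_negCont_eq q r (hr ▸ IsCoprime.mul_sub_right_right_iff.2 hco.symm) hr_lt hr_pos
  obtain ⟨b, l, rfl⟩ := List.exists_cons_of_ne_nil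
    (fun hL => hq1 (hLq ▸ (negCont_eq_one_iff hL2).2 hL))
  refine ⟨(p / q + 1) :: b :: l, List.forall_mem_cons.2 ⟨by nlinarith, hL2⟩, ?_, hLq⟩
  simp only [List.tail_cons] at hLr
  simp only [negCont, hLr, hLq]
  linarith
termination_by q.toNat
decreasing_by omega

/-- Every rational `p/q` with `p, q` coprime and `p > q > 0` has a unique negative
continued fraction expansion with all entries at least `2`: there is a unique
nonempty string `L = (a₁,…,aₙ)` of integers `aᵢ ≥ 2` with `K(a₁,…,aₙ) = p` and
`K(a₂,…,aₙ) = q`, i.e. `p/q = [a₁,…,aₙ]⁻`. -/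
theorem stmt0 (p q : ℤ) (hco : IsCoprime p q) (hqp : q < p) (hq : 0 < q) :
    ∃! L : List ℤ, L ≠ [] ∧ (∀ a ∈ L, 2 ≤ a) ∧ negCont L = p ∧ negCont L.tail = q := by
  obtain ⟨L, hL2, hLp, hLq⟩ := exists_negCont_eq p q hco hqp hq
  have hLne : L ≠ [] := fun hL => by
    have := (negCont_eq_one_iff hL2).2 hL
    omega
  exact ⟨L, ⟨hLne, hL2, hLp, hLq⟩, fun M ⟨_, hM2, hMp, hMq⟩ =>
    eq_of_negCont_eq hM2 hL2 (hMp.trans hLp.symm) (hMq.trans hLq.symm)⟩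
end

section
/- Complementarity of a pair of strings is symmetric in the two strings: a pair (A, B) of integer strings is complementary if and only if the pair (B, A) is complementary. -/
/-!
Reversing both strings and swapping them turns a 2-final expansion of one kind into one of the
other kind and fixes `((2),(2))`, so with `(A, B)` also `(Bʳ, Aʳ)` is complementary. It remains
to see that complementarity survives reversing both strings. Reversal turns 2-final expansions
into 2-initial ones, which act on the opposite ends of the strings; a 2-final expansion followed
by a 2-initial one can be performed in the other order, and at `((2),(2))` both kinds of
expansion give the same two pairs. Hence every pair reachable from `((2),(2))` by 2-initial
expansions is complementary.
-/

/-- A 2-final expansion of a pair of integer strings: it transforms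
`((a₁,…,aₙ),(b₁,…,bₘ))` into either `((a₁+1,a₂,…,aₙ),(b₁,…,bₘ,2))` or
`((2,a₁,…,aₙ),(b₁,…,bₘ₋₁,bₘ+1))`. -/
def TwoFinalExp : List ℤ × List ℤ → List ℤ × List ℤ → Prop := fun P Q =>
  (∃ (a : ℤ) (A B : List ℤ), P = (a :: A, B) ∧ Q = ((a + 1) :: A, B ++ [2])) ∨
  (∃ (A B : List ℤ) (b : ℤ), P = (A, B ++ [b]) ∧ Q = (2 :: A, B ++ [b + 1]))

/-- A pair of integer strings is complementary if it is obtained from the pair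
`((2),(2))` by a finite (possibly empty) sequence of 2-final expansions. -/
def Complementary (A B : List ℤ) : Prop :=
  Relation.ReflTransGen TwoFinalExp ([2], [2]) (A, B)

def TwoInitialExp : List ℤ × List ℤ → List ℤ × List ℤ → Prop := fun P Q =>
  (∃ (A : List ℤ) (b : ℤ) (B : List ℤ), P = (A, b :: B) ∧ Q = (A ++ [2], (b + 1) :: B)) ∨
  (∃ (A : List ℤ) (a : ℤ) (B : List ℤ), P = (A ++ [a], B) ∧ Q = (A ++ [a + 1], 2 :: B))

lemma TwoFinalExp.swap_map_reverse {P Q : List ℤ × List ℤ} (h : TwoFinalExp P Q) :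
    TwoFinalExp (P.swap.map List.reverse List.reverse) (Q.swap.map List.reverse List.reverse) := by
  rcases h with ⟨a, A, B, rfl, rfl⟩ | ⟨A, B, b, rfl, rfl⟩
  · exact .inr ⟨B.reverse, A.reverse, a, by simp, by simp⟩
  · exact .inl ⟨b, B.reverse, A.reverse, by simp, by simp⟩

lemma TwoFinalExp.twoInitialExp_map_reverse {P Q : List ℤ × List ℤ} (h : TwoFinalExp P Q) :
    TwoInitialExp (P.map List.reverse List.reverse) (Q.map List.reverse List.reverse) := by
  rcases h with ⟨a, A, B, rfl, rfl⟩ | ⟨A, B, b, rfl, rfl⟩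
  · exact .inr ⟨A.reverse, a, B.reverse, by simp, by simp⟩
  · exact .inl ⟨A.reverse, b, B.reverse, by simp, by simp⟩

lemma TwoFinalExp.exists_twoInitialExp_twoFinalExp {P R Q : List ℤ × List ℤ}
    (hPR : TwoFinalExp P R) (hRQ : TwoInitialExp R Q) (h₁ : P.1 ≠ []) (h₂ : P.2 ≠ []) :
    ∃ R', TwoInitialExp P R' ∧ TwoFinalExp R' Q := by
  rcases hPR with ⟨a, A, B, rfl, rfl⟩ | ⟨A, B, b, rfl, rfl⟩ <;>
  rcases hRQ with ⟨A', b', B', hR, rfl⟩ | ⟨A', a', B', hR, rfl⟩ <;>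
  obtain ⟨hA, hB⟩ := Prod.mk.inj hR
  · subst hA
    rcases List.append_eq_cons_iff.mp hB with ⟨rfl, -⟩ | ⟨B₁, rfl, rfl⟩
    · exact absurd rfl h₂
    exact ⟨_, .inl ⟨a :: A, b', B₁, rfl, rfl⟩, .inl ⟨a, A ++ [2], (b' + 1) :: B₁, rfl, rfl⟩⟩
  · subst hB
    rcases List.cons_eq_append_iff.mp hA with ⟨rfl, h⟩ | ⟨C, rfl, rfl⟩
    · obtain ⟨rfl, rfl⟩ := List.cons_eq_cons.mp h
      exact ⟨_, .inr ⟨[], a, B, rfl, rfl⟩, .inl ⟨a + 1, [], 2 :: B, rfl, rfl⟩⟩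
    · exact ⟨_, .inr ⟨a :: C, a', B, rfl, rfl⟩, .inl ⟨a, C ++ [a' + 1], 2 :: B, rfl, rfl⟩⟩
  · subst hA
    rcases List.append_eq_cons_iff.mp hB with ⟨rfl, h⟩ | ⟨B₁, rfl, rfl⟩
    · obtain ⟨rfl, rfl⟩ := List.cons_eq_cons.mp h
      exact ⟨_, .inl ⟨A, b, [], rfl, rfl⟩, .inr ⟨A ++ [2], [], b + 1, rfl, rfl⟩⟩
    · exact ⟨_, .inl ⟨A, b', B₁ ++ [b], rfl, rfl⟩, .inr ⟨A ++ [2], (b' + 1) :: B₁, b, rfl, rfl⟩⟩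
  · subst hB
    rcases List.cons_eq_append_iff.mp hA with ⟨rfl, h⟩ | ⟨C, rfl, rfl⟩
    · obtain ⟨-, rfl⟩ := List.cons_eq_cons.mp h
      exact absurd rfl h₁
    · exact ⟨_, .inr ⟨C, a', B ++ [b], rfl, rfl⟩, .inr ⟨C ++ [a' + 1], 2 :: B, b, rfl, rfl⟩⟩

lemma twoFinalExp_two_two_of_twoInitialExp {Q : List ℤ × List ℤ}
    (h : TwoInitialExp ([2], [2]) Q) : TwoFinalExp ([2], [2]) Q := by
  rcases h with ⟨A, b, B, hP, rfl⟩ | ⟨A, a, B, hP, rfl⟩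
  · obtain ⟨rfl, h⟩ := Prod.mk.inj hP
    obtain ⟨rfl, rfl⟩ := List.cons_eq_cons.mp h
    exact .inr ⟨[2], [], 2, rfl, rfl⟩
  · obtain ⟨h, rfl⟩ := Prod.mk.inj hP
    obtain ⟨rfl, rfl⟩ := List.append_singleton_inj.mp (show [] ++ [2] = A ++ [a] from h)
    exact .inl ⟨2, [], [2], rfl, rfl⟩

lemma ne_nil_of_reflTransGen_twoFinalExp {P : List ℤ × List ℤ}
    (h : Relation.ReflTransGen TwoFinalExp ([2], [2]) P) : P.1 ≠ [] ∧ P.2 ≠ [] := by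
  induction h with
  | refl => simp
  | tail _ hs _ => rcases hs with ⟨a, A, B, -, rfl⟩ | ⟨A, B, b, -, rfl⟩ <;> simp

lemma reflTransGen_twoFinalExp_of_twoInitialExp {P Q : List ℤ × List ℤ}
    (hP : Relation.ReflTransGen TwoFinalExp ([2], [2]) P) (hPQ : TwoInitialExp P Q) :
    Relation.ReflTransGen TwoFinalExp ([2], [2]) Q := by
  induction hP generalizing Q with
  | refl => exact .single (twoFinalExp_two_two_of_twoInitialExp hPQ)
  | tail hP₀ hstep ih =>
    obtain ⟨h₁, h₂⟩ := ne_nil_of_reflTransGen_twoFinalExp hP₀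
    obtain ⟨R', hR', hR'Q⟩ := hstep.exists_twoInitialExp_twoFinalExp hPQ h₁ h₂
    exact (ih hR').tail hR'Q

lemma reflTransGen_twoFinalExp_of_reflTransGen_twoInitialExp {Q : List ℤ × List ℤ}
    (h : Relation.ReflTransGen TwoInitialExp ([2], [2]) Q) :
    Relation.ReflTransGen TwoFinalExp ([2], [2]) Q := by
  induction h with
  | refl => exact .refl
  | tail _ hstep ih => exact reflTransGen_twoFinalExp_of_twoInitialExp ih hstep

lemma Complementary.symm {A B : List ℤ} (h : Complementary A B) : Complementary B A := by
  have hrev : Relation.ReflTransGen TwoFinalExp ([2], [2]) (B.reverse, A.reverse) :=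
    Relation.ReflTransGen.lift (fun P ↦ P.swap.map List.reverse List.reverse)
      (fun _ _ hPQ ↦ hPQ.swap_map_reverse) _ _ h
  have hinit : Relation.ReflTransGen TwoInitialExp ([2], [2]) (B, A) := by
    simpa [Function.onFun] using Relation.ReflTransGen.lift (Prod.map List.reverse List.reverse)
      (fun _ _ hPQ ↦ hPQ.twoInitialExp_map_reverse) _ _ hrev
  exact reflTransGen_twoFinalExp_of_reflTransGen_twoInitialExp hinit

/-- Complementarity is symmetric in the two strings. -/
theorem stmt2 (A B : List ℤ) : Complementary A B ↔ Complementary B A :=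
  ⟨Complementary.symm, Complementary.symm⟩
end

section
/- Let A = (a_1,…,a_n) and B = (b_1,…,b_m) be integer strings with all entries a_i ≥ 2 and b_j ≥ 2. Then the pair (A, B) is complementary if and only if K(a_1,…,a_n,1,b_1,…,b_m) = 0 (equivalently, the negative continued fraction [a_1,…,a_n,1,b_1,…,b_m]^- equals 0). -/
/-!
Encode a string by the product of the matrices `M(a) = !![a, -1; 1, 0]` in `SL(2, ℤ)`; its
top-left entry is the continuant. The two 2-final expansions act on the matrix of `A ++ 1 :: B`
by `X ↦ !![1, 1; 0, 1] * X * M(2)` and `X ↦ M(2) * X * !![1, 0; -1, 1]`, and both maps fix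
`!![0, -1; 1, -1]`, the matrix of `[2, 1, 2]`. Hence complementary pairs have continuant zero.

Conversely, every nonempty string `A` with entries `≥ 2` has a complementary partner, obtained by
building `A` up from `[2]` with the two expansions. If `K(A, 1, B) = 0`, a coprimality argument
in `SL(2, ℤ)` pins down the first column `(K(B), K(b₂,…,bₘ))` of the matrix of `B` in terms of
`A` alone, and a string with entries `≥ 2` is determined by that column (uniqueness of negative
continued fraction expansions). So `B` is the partner of `A`.
-/

/-- The first column of `negContMat [a₁,…,aₙ]` is `(K(a₁,…,aₙ), K(a₂,…,aₙ))`, the second entry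
being read as `0` when `n = 0`. -/
def negContMat (L : List ℤ) : Matrix (Fin 2) (Fin 2) ℤ :=
  (L.map fun a => !![a, -1; 1, 0]).prod

namespace negContMat

@[simp]
theorem nil : negContMat [] = 1 := rfl

@[simp]
theorem cons (a : ℤ) (L : List ℤ) : negContMat (a :: L) = !![a, -1; 1, 0] * negContMat L := rfl

@[simp]
theorem append (L L' : List ℤ) : negContMat (L ++ L') = negContMat L * negContMat L' := by
  simp [negContMat]

theorem cons_zero_zero (a : ℤ) (L : List ℤ) :
    negContMat (a :: L) 0 0 = a * negContMat L 0 0 - negContMat L 1 0 := by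
  simp [Matrix.mul_apply, Fin.sum_univ_two, sub_eq_add_neg]

theorem cons_one_zero (a : ℤ) (L : List ℤ) : negContMat (a :: L) 1 0 = negContMat L 0 0 := by
  simp [Matrix.mul_apply, Fin.sum_univ_two]

theorem zero_zero : ∀ L : List ℤ, negContMat L 0 0 = negCont L
  | [] => rfl
  | [a] => by simp [cons_zero_zero, negCont]
  | a :: b :: l => by
    rw [cons_zero_zero, cons_one_zero, zero_zero (b :: l), zero_zero l]
    rfl

theorem det (L : List ℤ) : (negContMat L).det = 1 := by
  induction L with
  | nil => simp
  | cons a L ih => rw [cons, Matrix.det_mul, ih, Matrix.det_fin_two_of]; ring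

theorem one_zero_nonneg_and_lt {L : List ℤ} (hL : ∀ a ∈ L, 2 ≤ a) :
    0 ≤ negContMat L 1 0 ∧ negContMat L 1 0 < negContMat L 0 0 := by
  induction L with
  | nil => simp
  | cons a L ih =>
    obtain ⟨ha, hL⟩ := List.forall_mem_cons.1 hL
    obtain ⟨h0, hlt⟩ := ih hL
    rw [cons_zero_zero, cons_one_zero]
    constructor <;> nlinarith

theorem zero_zero_pos {L : List ℤ} (hL : ∀ a ∈ L, 2 ≤ a) : 0 < negContMat L 0 0 := by
  obtain ⟨h0, hlt⟩ := one_zero_nonneg_and_lt hL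
  omega

theorem one_zero_cons_pos {a : ℤ} {L : List ℤ} (hL : ∀ x ∈ L, 2 ≤ x) :
    0 < negContMat (a :: L) 1 0 := by
  rw [cons_one_zero]
  exact zero_zero_pos hL

theorem eq_of_col_eq {L L' : List ℤ} (hL : ∀ a ∈ L, 2 ≤ a) (hL' : ∀ a ∈ L', 2 ≤ a)
    (h00 : negContMat L 0 0 = negContMat L' 0 0) (h10 : negContMat L 1 0 = negContMat L' 1 0) :
    L = L' := by
  induction L generalizing L' with
  | nil =>
    cases L' with
    | nil => rfl
    | cons b L' =>
      have := one_zero_cons_pos (a := b) (List.forall_mem_cons.1 hL').2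
      simp [← h10] at this
  | cons a L ih =>
    rw [List.forall_mem_cons] at hL
    obtain ⟨-, hL⟩ := hL
    cases L' with
    | nil =>
      have := one_zero_cons_pos (a := a) hL
      simp [h10] at this
    | cons b L' =>
      rw [List.forall_mem_cons] at hL'
      obtain ⟨-, hL'⟩ := hL'
      rw [cons_one_zero, cons_one_zero] at h10
      rw [cons_zero_zero, cons_zero_zero, h10] at h00
      obtain ⟨h0, hlt⟩ := one_zero_nonneg_and_lt hL
      obtain ⟨h0', hlt'⟩ := one_zero_nonneg_and_lt hL'
      obtain rfl : a = b := by
        by_contra hne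
        rcases lt_or_gt_of_ne hne with h | h <;> nlinarith
      rw [ih hL hL' h10 (by linarith)]

end negContMat

theorem Matrix.col_eq_of_det_eq_one_of_mul_mul_eq_zero {P Q : Matrix (Fin 2) (Fin 2) ℤ}
    (hP : P.det = 1) (hQ : Q.det = 1) (hP0 : 0 < P 0 0) (hQ0 : 0 < Q 0 0)
    (h : (P * !![(1 : ℤ), -1; 1, 0] * Q) 0 0 = 0) :
    Q 0 0 = P 0 0 ∧ Q 1 0 = P 0 0 + P 0 1 := by
  rw [Matrix.det_fin_two] at hP hQ
  have h' : (P 0 0 + P 0 1) * Q 0 0 = P 0 0 * Q 1 0 := by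
    simp only [Matrix.mul_apply, Fin.sum_univ_two, Matrix.of_apply, Matrix.cons_val',
      Matrix.cons_val_fin_one, Matrix.cons_val_zero, Matrix.cons_val_one] at h
    linear_combination h
  have hcopP : IsCoprime (P 0 0) (P 0 0 + P 0 1) :=
    ⟨P 1 1 + P 1 0, -P 1 0, by linear_combination hP⟩
  have hcopQ : IsCoprime (Q 0 0) (Q 1 0) := ⟨Q 1 1, -Q 0 1, by linear_combination hQ⟩
  have hPQ : P 0 0 ∣ Q 0 0 := hcopP.dvd_of_dvd_mul_left ⟨Q 1 0, h'⟩
  have hQP : Q 0 0 ∣ P 0 0 :=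
    hcopQ.dvd_of_dvd_mul_right ⟨P 0 0 + P 0 1, by linear_combination -h'⟩
  have h00 : Q 0 0 = P 0 0 := Int.dvd_antisymm hQ0.le hP0.le hQP hPQ
  refine ⟨h00, mul_left_cancel₀ hP0.ne' ?_⟩
  rw [h00] at h'
  linear_combination -h'

theorem complementary_induction {p : List ℤ × List ℤ → Prop} (base : p ([2], [2]))
    (step : ∀ {P Q}, TwoFinalExp P Q → p P → p Q) {A B : List ℤ} (h : Complementary A B) :
    p (A, B) :=
  Relation.ReflTransGen.rec (motive := fun P _ => p P) base (fun _ hPQ ih => step hPQ ih) h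

namespace Complementary

theorem succ_cons {a : ℤ} {A B : List ℤ} (h : Complementary (a :: A) B) :
    Complementary ((a + 1) :: A) (B ++ [2]) :=
  .tail h (.inl ⟨a, A, B, rfl, rfl⟩)

theorem two_cons {A B : List ℤ} {b : ℤ} (h : Complementary A (B ++ [b])) :
    Complementary (2 :: A) (B ++ [b + 1]) :=
  .tail h (.inr ⟨A, B, b, rfl, rfl⟩)

theorem snd_ne_nil {A B : List ℤ} (h : Complementary A B) : B ≠ [] :=
  complementary_induction (p := fun P => P.2 ≠ []) (by simp)
    (by rintro _ _ (⟨a, A, B, rfl, rfl⟩ | ⟨A, B, b, rfl, rfl⟩) _ <;> simp) h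

theorem two_le_of_mem_snd {A B : List ℤ} (h : Complementary A B) : ∀ b ∈ B, 2 ≤ b := by
  refine complementary_induction (p := fun P => ∀ b ∈ P.2, 2 ≤ b) (by simp) ?_ h
  rintro _ _ (⟨a, A, B, rfl, rfl⟩ | ⟨A, B, b, rfl, rfl⟩) hB <;>
    simp only [List.forall_mem_append, List.forall_mem_singleton] at hB ⊢
  · exact ⟨hB, le_rfl⟩
  · exact ⟨hB.1, by linarith [hB.2]⟩

theorem negContMat_eq {A B : List ℤ} (h : Complementary A B) :
    negContMat (A ++ 1 :: B) = !![0, -1; 1, -1] := by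
  refine complementary_induction (p := fun P => negContMat (P.1 ++ 1 :: P.2) = !![0, -1; 1, -1])
    (by simp) ?_ h
  rintro _ _ (⟨a, A, B, rfl, rfl⟩ | ⟨A, B, b, rfl, rfl⟩) hP <;> dsimp only at hP ⊢
  · have hY : !![a, -1; 1, 0] * negContMat (A ++ 1 :: B) = !![0, -1; 1, -1] := hP
    have hT : !![a + 1, -1; 1, 0] = !![1, 1; 0, 1] * !![a, -1; 1, 0] := by simp
    calc negContMat ((a + 1) :: A ++ 1 :: (B ++ [2]))
        = !![1, 1; 0, 1] * (!![a, -1; 1, 0] * negContMat (A ++ 1 :: B)) * !![2, -1; 1, 0] := by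
          simp only [List.cons_append, negContMat.cons, negContMat.append, negContMat.nil, hT,
            Matrix.mul_one, Matrix.mul_assoc]
      _ = !![0, -1; 1, -1] := by rw [hY]; simp
  · have hY : negContMat (A ++ 1 :: B) * !![b, -1; 1, 0] = !![0, -1; 1, -1] := by
      simpa [Matrix.mul_assoc] using hP
    have hS : !![b + 1, -1; 1, 0] = !![b, -1; 1, 0] * !![1, 0; -1, 1] := by simp
    calc negContMat (2 :: A ++ 1 :: (B ++ [b + 1]))
        = !![2, -1; 1, 0] * (negContMat (A ++ 1 :: B) * !![b, -1; 1, 0]) * !![1, 0; -1, 1] := by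
          simp only [List.cons_append, negContMat.cons, negContMat.append, negContMat.nil, hS,
            Matrix.mul_one, Matrix.mul_assoc]
      _ = !![0, -1; 1, -1] := by rw [hY]; simp

theorem negCont_append_one_cons_eq_zero {A B : List ℤ} (h : Complementary A B) :
    negCont (A ++ 1 :: B) = 0 := by
  rw [← negContMat.zero_zero, h.negContMat_eq]
  rfl

end Complementary

theorem exists_complementary {A : List ℤ} (hne : A ≠ []) (hA : ∀ a ∈ A, 2 ≤ a) :
    ∃ B, Complementary A B := by
  induction A with
  | nil => exact absurd rfl hne
  | cons c A ih =>
    clear hne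
    rw [List.forall_mem_cons] at hA
    obtain ⟨hc, hA⟩ := hA
    induction c, hc using Int.leInduction with
    | base =>
      rcases eq_or_ne A [] with rfl | hA_ne
      · exact ⟨[2], .refl⟩
      obtain ⟨B, hB⟩ := ih hA_ne hA
      obtain ⟨B, b, rfl⟩ := (List.eq_nil_or_concat' B).resolve_left hB.snd_ne_nil
      exact ⟨_, hB.two_cons⟩
    | succ c _ ihc =>
      obtain ⟨B, hB⟩ := ihc
      exact ⟨_, hB.succ_cons⟩

theorem negContMat_col_of_negCont_eq_zero {A B : List ℤ} (hA : ∀ a ∈ A, 2 ≤ a)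
    (hB : ∀ b ∈ B, 2 ≤ b) (h : negCont (A ++ 1 :: B) = 0) :
    negContMat B 0 0 = negContMat A 0 0 ∧
      negContMat B 1 0 = negContMat A 0 0 + negContMat A 0 1 := by
  refine Matrix.col_eq_of_det_eq_one_of_mul_mul_eq_zero (negContMat.det A) (negContMat.det B)
    (negContMat.zero_zero_pos hA) (negContMat.zero_zero_pos hB) ?_
  have hK := negContMat.zero_zero (A ++ 1 :: B)
  rwa [h, negContMat.append, negContMat.cons, ← Matrix.mul_assoc] at hK

theorem eq_of_negCont_append_one_cons_eq_zero {A B B' : List ℤ} (hA : ∀ a ∈ A, 2 ≤ a)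
    (hB : ∀ b ∈ B, 2 ≤ b) (hB' : ∀ b ∈ B', 2 ≤ b) (h : negCont (A ++ 1 :: B) = 0)
    (h' : negCont (A ++ 1 :: B') = 0) : B = B' := by
  obtain ⟨h00, h10⟩ := negContMat_col_of_negCont_eq_zero hA hB h
  obtain ⟨h00', h10'⟩ := negContMat_col_of_negCont_eq_zero hA hB' h'
  exact negContMat.eq_of_col_eq hB hB' (h00.trans h00'.symm) (h10.trans h10'.symm)

/-- For integer strings `A = (a₁,…,aₙ)` and `B = (b₁,…,bₘ)` with all entries at
least 2, the pair `(A, B)` is complementary if and only if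
`K(a₁,…,aₙ,1,b₁,…,bₘ) = 0` (equivalently, `[a₁,…,aₙ,1,b₁,…,bₘ]⁻ = 0`). -/
theorem stmt4 (A B : List ℤ) (hA : ∀ a ∈ A, 2 ≤ a) (hB : ∀ b ∈ B, 2 ≤ b) :
    Complementary A B ↔ negCont (A ++ 1 :: B) = 0 := by
  refine ⟨Complementary.negCont_append_one_cons_eq_zero, fun h => ?_⟩
  have hA_ne : A ≠ [] := by
    rintro rfl
    rw [← negContMat.zero_zero, List.nil_append, negContMat.cons_zero_zero] at h
    have := negContMat.one_zero_nonneg_and_lt hB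
    omega
  obtain ⟨B', hB'⟩ := exists_complementary hA_ne hA
  rwa [eq_of_negCont_append_one_cons_eq_zero hA hB hB'.two_le_of_mem_snd h
    hB'.negCont_append_one_cons_eq_zero]
end

section
/- Let A = (a_1,…,a_n) and B = (b_1,…,b_m) be integer strings with all entries at least 2, and set p = K(a_1,…,a_n), q = K(a_2,…,a_n), r = K(b_1,…,b_m), s = K(b_2,…,b_m). Let q* be the unique integer with 0 < q* < p and q·q* ≡ 1 (mod p). Then the pair (A, B) is complementary if and only if r = p and s = p − q*. -/
/-!
With `M(a) = !![a, -1; 1, 0]`, the product `M(a₁)⋯M(aₙ)` has first column `(K(A), K(A.tail))`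
and determinant `1`. Both 2-final expansions preserve the relation "the first row of `M(B)` is
`(K(A), K(A.tail) - K(A))`", which holds for `((2), (2))`. For a complementary pair this gives
`r = p`, and `det M(B) = 1` becomes `p·m + (p - q)·s = 1`, i.e. `s ≡ -q* (mod p)`; since
`0 ≤ s < p` this pins down `s = p - q*`.

Conversely, every `A` with entries `≥ 2` has a complementary partner (induct on `A` and on its
first entry), and a string with entries `≥ 2` is determined by its first column
`(K(B), K(B.tail))`, by uniqueness of Euclidean division in `K(b :: T) = b·K(T) - K(T.tail)`.
-/

def contMat (L : List ℤ) : Matrix (Fin 2) (Fin 2) ℤ :=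
  (L.map fun a => !![a, -1; 1, 0]).prod

@[simp]
lemma contMat_nil : contMat [] = 1 := rfl

lemma contMat_cons (a : ℤ) (L : List ℤ) :
    contMat (a :: L) = !![a, -1; 1, 0] * contMat L := by
  simp [contMat]

lemma contMat_append_singleton (L : List ℤ) (b : ℤ) :
    contMat (L ++ [b]) = contMat L * !![b, -1; 1, 0] := by
  simp [contMat]

lemma det_contMat (L : List ℤ) : (contMat L).det = 1 := by
  rw [contMat, ← Matrix.coe_detMonoidHom, map_list_prod]
  simp [List.prod_eq_one, Matrix.det_fin_two_of]

lemma contMat_cons_zero_zero (a : ℤ) (L : List ℤ) :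
    contMat (a :: L) 0 0 = a * contMat L 0 0 - contMat L 1 0 := by
  simp [contMat_cons, Matrix.mul_apply, Fin.sum_univ_two]; ring

lemma contMat_cons_one_zero (a : ℤ) (L : List ℤ) :
    contMat (a :: L) 1 0 = contMat L 0 0 := by
  simp [contMat_cons, Matrix.mul_apply, Fin.sum_univ_two]

lemma contMat_zero_zero_eq_negCont : ∀ L : List ℤ, contMat L 0 0 = negCont L
  | [] => rfl
  | [a] => by simp [contMat_cons_zero_zero, negCont]
  | a :: b :: l => by
    rw [contMat_cons_zero_zero, contMat_cons_one_zero, contMat_zero_zero_eq_negCont,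
      contMat_zero_zero_eq_negCont]
    rfl

lemma contMat_one_zero_eq_negCont_tail {L : List ℤ} (hL : L ≠ []) :
    contMat L 1 0 = negCont L.tail := by
  obtain ⟨a, T, rfl⟩ := List.exists_cons_of_ne_nil hL
  rw [contMat_cons_one_zero, contMat_zero_zero_eq_negCont, List.tail_cons]

lemma contMat_append_singleton_zero_zero (L : List ℤ) (b : ℤ) :
    contMat (L ++ [b]) 0 0 = b * contMat L 0 0 + contMat L 0 1 := by
  simp [contMat_append_singleton, Matrix.mul_apply, Fin.sum_univ_two]; ring

lemma contMat_append_singleton_zero_one (L : List ℤ) (b : ℤ) :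
    contMat (L ++ [b]) 0 1 = - contMat L 0 0 := by
  simp [contMat_append_singleton, Matrix.mul_apply, Fin.sum_univ_two]

lemma ne_nil_of_one_lt_negCont {L : List ℤ} (h : 1 < negCont L) : L ≠ [] := by
  rintro rfl
  exact h.ne rfl

theorem Int.ModEq.eq_of_lt_of_lt {n a b : ℤ} (h : a ≡ b [ZMOD n]) (ha₀ : 0 ≤ a) (ha : a < n)
    (hb₀ : 0 ≤ b) (hb : b < n) : a = b := by
  rwa [Int.ModEq, Int.emod_eq_of_lt ha₀ ha, Int.emod_eq_of_lt hb₀ hb] at h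

lemma contMat_one_zero_nonneg_and_lt :
    ∀ {L : List ℤ}, (∀ x ∈ L, 2 ≤ x) → 0 ≤ contMat L 1 0 ∧ contMat L 1 0 < contMat L 0 0
  | [], _ => by simp
  | a :: L, h => by
    obtain ⟨h₀, h₁⟩ :=
      contMat_one_zero_nonneg_and_lt fun x hx => h x (List.mem_cons_of_mem a hx)
    have ha : 2 ≤ a := h a List.mem_cons_self
    rw [contMat_cons_one_zero, contMat_cons_zero_zero]
    constructor <;> nlinarith

lemma eq_of_contMat_col_zero_eq : ∀ {L L' : List ℤ}, (∀ x ∈ L, 2 ≤ x) → (∀ x ∈ L', 2 ≤ x) →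
    contMat L 0 0 = contMat L' 0 0 → contMat L 1 0 = contMat L' 1 0 → L = L'
  | [], [], _, _, _, _ => rfl
  | [], a :: L', _, h', _, h₁ => by
    have := contMat_one_zero_nonneg_and_lt fun x hx => h' x (List.mem_cons_of_mem a hx)
    simp [contMat_cons_one_zero] at h₁
    omega
  | a :: L, [], h, _, _, h₁ => by
    have := contMat_one_zero_nonneg_and_lt fun x hx => h x (List.mem_cons_of_mem a hx)
    simp [contMat_cons_one_zero] at h₁
    omega
  | a :: L, a' :: L', h, h', h₀, h₁ => by
    have hL : ∀ x ∈ L, 2 ≤ x := fun x hx => h x (List.mem_cons_of_mem a hx)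
    have hL' : ∀ x ∈ L', 2 ≤ x := fun x hx => h' x (List.mem_cons_of_mem a' hx)
    obtain ⟨hc₀, hc⟩ := contMat_one_zero_nonneg_and_lt hL
    obtain ⟨hc₀', hc'⟩ := contMat_one_zero_nonneg_and_lt hL'
    rw [contMat_cons_one_zero, contMat_cons_one_zero] at h₁
    rw [contMat_cons_zero_zero, contMat_cons_zero_zero, h₁] at h₀
    -- `a x - c = a' x - c'` with `0 ≤ c, c' < x` determines both `a` and `c`
    have hc_eq : contMat L 1 0 = contMat L' 1 0 :=
      Int.ModEq.eq_of_lt_of_lt (Int.modEq_of_dvd ⟨a' - a, by linear_combination h₀⟩)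
        hc₀ (h₁ ▸ hc) hc₀' hc'
    have ha : a = a' := mul_right_cancel₀ (by omega : contMat L' 0 0 ≠ 0) (by linarith)
    rw [ha, eq_of_contMat_col_zero_eq hL hL' h₁ hc_eq]

lemma Complementary.contMat_row_zero {A B : List ℤ} (h : Complementary A B) :
    contMat B 0 0 = contMat A 0 0 ∧ contMat B 0 1 = contMat A 1 0 - contMat A 0 0 := by
  suffices ∀ P, Relation.ReflTransGen TwoFinalExp ([2], [2]) P →
      contMat P.2 0 0 = contMat P.1 0 0 ∧ contMat P.2 0 1 = contMat P.1 1 0 - contMat P.1 0 0 from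
    this _ h
  intro P h
  induction h with
  | refl => decide
  | tail _ hstep ih =>
    rcases hstep with ⟨a, A, B, rfl, rfl⟩ | ⟨A, B, b, rfl, rfl⟩ <;>
    · simp only [contMat_append_singleton_zero_zero, contMat_append_singleton_zero_one,
        contMat_cons_zero_zero, contMat_cons_one_zero] at ih ⊢
      constructor <;> linarith

lemma Complementary.ne_nil {A B : List ℤ} (h : Complementary A B) : A ≠ [] ∧ B ≠ [] := by
  rcases h.cases_tail with h | ⟨P, -, ⟨a, A, B, -, h⟩ | ⟨A, B, b, -, h⟩⟩ <;>
    simp_all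

lemma exists_complementary_s6 : ∀ {a : ℤ} {A : List ℤ}, (∀ x ∈ a :: A, 2 ≤ x) →
    ∃ B, Complementary (a :: A) B ∧ ∀ b ∈ B, 2 ≤ b
  | a, A, hA => by
    have hA' : ∀ x ∈ A, 2 ≤ x := fun x hx => hA x (List.mem_cons_of_mem a hx)
    have ha : 2 ≤ a := hA a List.mem_cons_self
    clear hA
    induction a, ha using Int.leInduction with
    | base =>
      rcases A with _ | ⟨a₁, A₁⟩
      · exact ⟨[2], .refl, by simp⟩
      obtain ⟨B, hB, hB₂⟩ := exists_complementary_s6 hA'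
      obtain ⟨C, b, rfl⟩ := (List.eq_nil_or_concat' B).resolve_left hB.ne_nil.2
      have hb : 2 ≤ b := hB₂ b (by simp)
      refine ⟨C ++ [b + 1], hB.tail (Or.inr ⟨_, C, b, rfl, rfl⟩), ?_⟩
      simp only [List.forall_mem_append, List.forall_mem_singleton] at hB₂ ⊢
      exact ⟨hB₂.1, by omega⟩
    | succ a ha ih =>
      obtain ⟨B, hB, hB₂⟩ := ih
      refine ⟨B ++ [2], hB.tail (Or.inl ⟨a, A, B, rfl, rfl⟩), ?_⟩
      simpa only [List.forall_mem_append, List.forall_mem_singleton] using ⟨hB₂, le_rfl⟩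

lemma Complementary.negCont_eq {A B : List ℤ} (h : Complementary A B) :
    negCont B = negCont A := by
  simpa only [contMat_zero_zero_eq_negCont] using h.contMat_row_zero.1

lemma Complementary.negCont_tail_eq {A B : List ℤ} (h : Complementary A B)
    (hB : ∀ b ∈ B, 2 ≤ b) {qs : ℤ} (hqs₀ : 0 < qs) (hqs : qs < negCont A)
    (hinv : negCont A.tail * qs ≡ 1 [ZMOD negCont A]) :
    negCont B.tail = negCont A - qs := by
  obtain ⟨hA, hB₀⟩ := h.ne_nil
  obtain ⟨h₀₀, h₀₁⟩ := h.contMat_row_zero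
  obtain ⟨hs₀, hs⟩ := contMat_one_zero_nonneg_and_lt hB
  have hdet := det_contMat B
  rw [Matrix.det_fin_two, h₀₀, h₀₁] at hdet
  rw [h₀₀] at hs
  simp only [contMat_zero_zero_eq_negCont, contMat_one_zero_eq_negCont_tail hA,
    contMat_one_zero_eq_negCont_tail hB₀] at hdet hs hs₀
  obtain ⟨d, hd⟩ := hinv.dvd
  -- with `p = K(A)`, `q = K(A.tail)`, `s = K(B.tail)`, `hdet` reads `p·m - (q - p)·s = 1`,
  -- so `q·s ≡ -1` and hence `s ≡ -qs (mod p)`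
  refine Int.ModEq.eq_of_lt_of_lt (Int.modEq_of_dvd
    ⟨1 - qs * contMat B 1 1 - qs * negCont B.tail - d * negCont B.tail, ?_⟩)
    hs₀ hs (by omega) (by omega)
  linear_combination qs * hdet - negCont B.tail * hd

/-- Let `A`, `B` be integer strings with all entries at least 2, and set
`p = K(A)`, `q = K(A.tail)`, `r = K(B)`, `s = K(B.tail)`.  Let `q*` be the unique
integer with `0 < q* < p` and `q·q* ≡ 1 (mod p)`.  Then `(A, B)` is complementary
if and only if `r = p` and `s = p − q*`. -/
theorem stmt6 (A B : List ℤ) (hA : ∀ a ∈ A, 2 ≤ a) (hB : ∀ b ∈ B, 2 ≤ b)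
    (qs : ℤ) (hqs0 : 0 < qs) (hqsp : qs < negCont A)
    (hqs1 : negCont A.tail * qs ≡ 1 [ZMOD negCont A]) :
    Complementary A B ↔
      negCont B = negCont A ∧ negCont B.tail = negCont A - qs := by
  refine ⟨fun h => ⟨h.negCont_eq, h.negCont_tail_eq hB hqs0 hqsp hqs1⟩,
    fun ⟨hr, hs⟩ => ?_⟩
  obtain ⟨a, A, rfl⟩ :=
    List.exists_cons_of_ne_nil (ne_nil_of_one_lt_negCont (L := A) (by omega))
  obtain ⟨B₀, hB₀, hB₀₂⟩ := exists_complementary_s6 hA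
  suffices B = B₀ from this ▸ hB₀
  refine eq_of_contMat_col_zero_eq hB hB₀₂ ?_ ?_
  · rw [contMat_zero_zero_eq_negCont, contMat_zero_zero_eq_negCont, hr, hB₀.negCont_eq]
  · rw [contMat_one_zero_eq_negCont_tail (ne_nil_of_one_lt_negCont (L := B) (by omega)),
      contMat_one_zero_eq_negCont_tail hB₀.ne_nil.2, hs, hB₀.negCont_tail_eq hB₀₂ hqs0 hqsp hqs1]
end

section
/- Let a_1, …, a_n be integers with each a_i ≥ 2, and set p = K(a_1,…,a_n) and q = K(a_2,…,a_n). Then K(a_n,…,a_1) = p, and the integer q' = K(a_1,…,a_{n−1}) satisfies 0 < q' < p and q·q' ≡ 1 (mod p); equivalently, if [a_1,…,a_n]^- = p/q then [a_n,…,a_1]^- = p/q*, where q* is the unique integer with 0 < q* < p and q·q* ≡ 1 (mod p). -/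
theorem negCont_append_pair (b a : ℤ) :
    ∀ l : List ℤ, negCont (l ++ [b, a]) = a * negCont (l ++ [b]) - negCont l
  | [] => by simp only [List.nil_append, negCont]; ring
  | [c] => by simp only [List.cons_append, List.nil_append, negCont]; ring
  | c :: d :: m => by
    have ih₁ := negCont_append_pair b a (d :: m)
    have ih₂ := negCont_append_pair b a m
    simp only [List.cons_append] at ih₁ ⊢
    rw [negCont, negCont, ih₁, ih₂, negCont]
    ring

theorem negCont_reverse : ∀ l : List ℤ, negCont l.reverse = negCont l
  | [] => rfl
  | [_] => rfl
  | a :: b :: l => by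
    have ih₁ := negCont_reverse (b :: l)
    have ih₂ := negCont_reverse l
    rw [List.reverse_cons, List.reverse_cons, List.append_assoc, List.singleton_append,
      negCont_append_pair, ← List.reverse_cons, ih₁, ih₂, negCont]

theorem negCont_cons_mul_sub_eq_one (a b : ℤ) : ∀ l : List ℤ,
    negCont (a :: l) * negCont (l ++ [b]) - negCont (a :: l ++ [b]) * negCont l = 1
  | [] => by simp only [List.nil_append, List.cons_append, negCont]; ring
  | c :: m => by
    have ih := negCont_cons_mul_sub_eq_one c b m
    simp only [List.cons_append] at ih ⊢
    rw [negCont, negCont]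
    linear_combination ih

theorem negCont_tail_mul_dropLast_modEq (L : List ℤ) (hL : L ≠ []) :
    negCont L.tail * negCont L.dropLast ≡ 1 [ZMOD negCont L] := by
  obtain ⟨l, x, rfl⟩ : ∃ l x, L = l ++ [x] :=
    ⟨L.dropLast, L.getLast hL, (List.dropLast_append_getLast hL).symm⟩
  rcases l with _ | ⟨a, m⟩
  · simp [negCont]
  · have hdet := negCont_cons_mul_sub_eq_one a x m
    rw [List.cons_append] at hdet
    rw [List.dropLast_concat, List.cons_append, List.tail_cons]
    exact Int.modEq_iff_dvd.mpr ⟨-negCont m, by linear_combination -hdet⟩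

theorem negCont_pos_and_lt_cons (a : ℤ) (l : List ℤ) (h : ∀ x ∈ a :: l, 2 ≤ x) :
    0 < negCont l ∧ negCont l < negCont (a :: l) := by
  induction l generalizing a with
  | nil =>
    have ha : 2 ≤ a := h a (by simp)
    show (0 : ℤ) < 1 ∧ 1 < a
    omega
  | cons b m ih =>
    have ha : 2 ≤ a := h a (by simp)
    obtain ⟨hm, hlt⟩ := ih b fun x hx => h x (List.mem_cons_of_mem a hx)
    have hpos : 0 < negCont (b :: m) := hm.trans hlt
    refine ⟨hpos, ?_⟩
    rw [negCont]
    nlinarith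

theorem negCont_dropLast_pos_and_lt (L : List ℤ) (hL : L ≠ []) (h : ∀ x ∈ L, 2 ≤ x) :
    0 < negCont L.dropLast ∧ negCont L.dropLast < negCont L := by
  obtain ⟨l, x, rfl⟩ : ∃ l x, L = l ++ [x] :=
    ⟨L.dropLast, L.getLast hL, (List.dropLast_append_getLast hL).symm⟩
  rw [List.dropLast_concat, ← negCont_reverse (l ++ [x]), List.reverse_concat,
    ← negCont_reverse l]
  exact negCont_pos_and_lt_cons x l.reverse fun y hy => h y (by simp at hy ⊢; tauto)

/-- Let `a₁,…,aₙ` (`n ≥ 1`) be integers with each `aᵢ ≥ 2`, and set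
`p = K(a₁,…,aₙ)`, `q = K(a₂,…,aₙ)`.  Then `K(aₙ,…,a₁) = p`, and the integer
`q' = K(a₁,…,aₙ₋₁)` satisfies `0 < q' < p` and `q·q' ≡ 1 (mod p)`; equivalently,
if `[a₁,…,aₙ]⁻ = p/q` then `[aₙ,…,a₁]⁻ = p/q*`, where `q*` is the unique integer
with `0 < q* < p` and `q·q* ≡ 1 (mod p)`. -/
theorem stmt7 (L : List ℤ) (hL : L ≠ []) (h2 : ∀ a ∈ L, 2 ≤ a) :
    negCont L.reverse = negCont L ∧
    0 < negCont L.dropLast ∧ negCont L.dropLast < negCont L ∧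
    negCont L.tail * negCont L.dropLast ≡ 1 [ZMOD negCont L] ∧
    negCont L.reverse.tail = negCont L.dropLast := by
  obtain ⟨hpos, hlt⟩ := negCont_dropLast_pos_and_lt L hL h2
  exact ⟨negCont_reverse L, hpos, hlt, negCont_tail_mul_dropLast_modEq L hL,
    by rw [List.tail_reverse, negCont_reverse]⟩
end

section
/- Let a_1, …, a_n be integers with each a_i ≥ 2, and set p = K(a_1,…,a_n) and q = K(a_2,…,a_n). Then the string (a_1,…,a_n) is self-complementary if and only if q² ≡ −1 (mod p). -/
def negContMatrix (l : List ℤ) : Matrix (Fin 2) (Fin 2) ℤ :=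
  (l.map fun a => !![a, -1; 1, 0]).prod

@[simp]
lemma negContMatrix_nil : negContMatrix [] = 1 := rfl

lemma negContMatrix_cons (a : ℤ) (l : List ℤ) :
    negContMatrix (a :: l) = !![a, -1; 1, 0] * negContMatrix l := by
  simp [negContMatrix]

lemma negContMatrix_append_singleton (l : List ℤ) (b : ℤ) :
    negContMatrix (l ++ [b]) = negContMatrix l * !![b, -1; 1, 0] := by
  simp [negContMatrix]

@[simp]
lemma negContMatrix_cons_zero (a : ℤ) (l : List ℤ) (j : Fin 2) :
    negContMatrix (a :: l) 0 j = a * negContMatrix l 0 j - negContMatrix l 1 j := by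
  simp [negContMatrix_cons, Matrix.mul_apply, Fin.sum_univ_two, sub_eq_add_neg]

@[simp]
lemma negContMatrix_cons_one (a : ℤ) (l : List ℤ) (j : Fin 2) :
    negContMatrix (a :: l) 1 j = negContMatrix l 0 j := by
  simp [negContMatrix_cons, Matrix.mul_apply, Fin.sum_univ_two]

@[simp]
lemma negContMatrix_append_singleton_zero (l : List ℤ) (b : ℤ) (i : Fin 2) :
    negContMatrix (l ++ [b]) i 0 = b * negContMatrix l i 0 + negContMatrix l i 1 := by
  simp [negContMatrix_append_singleton, Matrix.mul_apply, Fin.sum_univ_two, mul_comm]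

@[simp]
lemma negContMatrix_append_singleton_one (l : List ℤ) (b : ℤ) (i : Fin 2) :
    negContMatrix (l ++ [b]) i 1 = -negContMatrix l i 0 := by
  simp [negContMatrix_append_singleton, Matrix.mul_apply, Fin.sum_univ_two]

lemma det_negContMatrix (l : List ℤ) : (negContMatrix l).det = 1 := by
  induction l with
  | nil => simp
  | cons a l ih => rw [negContMatrix_cons, Matrix.det_mul, ih, Matrix.det_fin_two_of]; ring

lemma negContMatrix_zero_zero (l : List ℤ) : negContMatrix l 0 0 = negCont l := by
  induction l using negCont.induct with
  | case1 => simp [negCont]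
  | case2 a => simp [negCont]
  | case3 a b l ih₁ ih₂ => rw [negContMatrix_cons_zero, negContMatrix_cons_one, ih₁, ih₂, negCont]

lemma negContMatrix_one_zero_of_ne_nil {l : List ℤ} (hl : l ≠ []) :
    negContMatrix l 1 0 = negCont l.tail := by
  obtain ⟨a, l, rfl⟩ := List.exists_cons_of_ne_nil hl
  rw [negContMatrix_cons_one, negContMatrix_zero_zero, List.tail_cons]

lemma lt_mul_sub_of_two_le {a x y : ℤ} (ha : 2 ≤ a) (hy : 0 ≤ y) (hyx : y < x) :
    x < a * x - y := by
  nlinarith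

lemma negContMatrix_one_zero_nonneg_and_lt {l : List ℤ} (h : ∀ x ∈ l, 2 ≤ x) :
    0 ≤ negContMatrix l 1 0 ∧ negContMatrix l 1 0 < negContMatrix l 0 0 := by
  induction l with
  | nil => simp
  | cons a l ih =>
    obtain ⟨hq, hqp⟩ := ih fun x hx => h x (List.mem_cons_of_mem a hx)
    simp only [negContMatrix_cons_zero, negContMatrix_cons_one]
    exact ⟨by omega, lt_mul_sub_of_two_le (h a List.mem_cons_self) hq hqp⟩

lemma neg_negContMatrix_zero_one_nonneg_and_lt {l : List ℤ} (h : ∀ x ∈ l, 2 ≤ x) :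
    0 ≤ -negContMatrix l 0 1 ∧ -negContMatrix l 0 1 < negContMatrix l 0 0 := by
  induction l using List.reverseRecOn with
  | nil => simp
  | append_singleton l b ih =>
    obtain ⟨hr, hrp⟩ := ih fun x hx => h x (List.mem_append_left _ hx)
    simp only [negContMatrix_append_singleton_zero, negContMatrix_append_singleton_one, neg_neg,
      ← sub_neg_eq_add]
    exact ⟨by omega, lt_mul_sub_of_two_le (h b (by simp)) hr hrp⟩

lemma negContMatrix_one_zero_pos {l : List ℤ} (hl : l ≠ []) (h : ∀ x ∈ l, 2 ≤ x) :
    0 < negContMatrix l 1 0 := by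
  obtain ⟨a, l, rfl⟩ := List.exists_cons_of_ne_nil hl
  have := negContMatrix_one_zero_nonneg_and_lt fun x hx => h x (List.mem_cons_of_mem a hx)
  rw [negContMatrix_cons_one]
  omega

lemma negContMatrix_zero_one_neg {l : List ℤ} (hl : l ≠ []) (h : ∀ x ∈ l, 2 ≤ x) :
    negContMatrix l 0 1 < 0 := by
  obtain ⟨l, b, rfl⟩ := l.eq_nil_or_concat'.resolve_left hl
  have := neg_negContMatrix_zero_one_nonneg_and_lt fun x hx => h x (List.mem_append_left _ hx)
  rw [negContMatrix_append_singleton_one]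
  omega

theorem Complementary.negContMatrix_eq {A B : List ℤ} (h : Complementary A B) :
    negContMatrix B 0 0 = negContMatrix A 0 0 ∧
      negContMatrix A 1 0 - negContMatrix B 0 1 = negContMatrix A 0 0 := by
  suffices ∀ P, Relation.ReflTransGen TwoFinalExp ([2], [2]) P →
      negContMatrix P.2 0 0 = negContMatrix P.1 0 0 ∧
        negContMatrix P.1 1 0 - negContMatrix P.2 0 1 = negContMatrix P.1 0 0 from this _ h
  intro P hP
  induction hP with
  | refl => simp
  | tail _ hstep ih =>
    rcases hstep with ⟨a, A, B, rfl, rfl⟩ | ⟨A, B, b, rfl, rfl⟩ <;>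
    · simp only [negContMatrix_cons_zero, negContMatrix_cons_one,
        negContMatrix_append_singleton_zero, negContMatrix_append_singleton_one] at ih ⊢
      constructor <;> linarith

theorem Complementary.expand_left {a : ℤ} {A B : List ℤ} (h : Complementary (a :: A) B) :
    Complementary ((a + 1) :: A) (B ++ [2]) :=
  h.tail (Or.inl ⟨a, A, B, rfl, rfl⟩)

theorem Complementary.expand_right {A B : List ℤ} {b : ℤ} (h : Complementary A (B ++ [b])) :
    Complementary (2 :: A) (B ++ [b + 1]) :=
  h.tail (Or.inr ⟨A, B, b, rfl, rfl⟩)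

theorem complementary_of_negContMatrix {A B : List ℤ} (hA : A ≠ []) (hB : B ≠ [])
    (h2A : ∀ x ∈ A, 2 ≤ x) (h2B : ∀ x ∈ B, 2 ≤ x)
    (hp : negContMatrix B 0 0 = negContMatrix A 0 0)
    (hqr : negContMatrix A 1 0 - negContMatrix B 0 1 = negContMatrix A 0 0) :
    Complementary A B := by
  obtain ⟨n, hn⟩ : ∃ n : ℕ, negContMatrix A 0 0 ≤ n := ⟨_, Int.self_le_toNat _⟩
  induction n generalizing A B with
  | zero =>
    have := negContMatrix_one_zero_pos hA h2A
    have := negContMatrix_one_zero_nonneg_and_lt h2A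
    omega
  | succ n ih =>
    obtain ⟨a, A, rfl⟩ := List.exists_cons_of_ne_nil hA
    obtain ⟨B, b, rfl⟩ := B.eq_nil_or_concat'.resolve_left hB
    have ha : 2 ≤ a := h2A a List.mem_cons_self
    have hb : 2 ≤ b := h2B b (by simp)
    have h2A₀ : ∀ x ∈ A, 2 ≤ x := fun x hx => h2A x (List.mem_cons_of_mem a hx)
    have h2B₀ : ∀ x ∈ B, 2 ≤ x := fun x hx => h2B x (List.mem_append_left _ hx)
    obtain ⟨hq, hqp⟩ := negContMatrix_one_zero_nonneg_and_lt h2A₀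
    obtain ⟨hr, hrp⟩ := neg_negContMatrix_zero_one_nonneg_and_lt h2B₀
    simp only [negContMatrix_cons_zero, negContMatrix_cons_one,
      negContMatrix_append_singleton_zero, negContMatrix_append_singleton_one] at hp hqr hn
    rcases (show a = 2 ∨ 3 ≤ a by omega) with rfl | ha3 <;>
      rcases (show b = 2 ∨ 3 ≤ b by omega) with rfl | hb3
    · -- `K(tail A₀) + K(init B₀) = 0`, forcing `A = B = [2]`
      have hA₀ : A = [] := by
        by_contra hA₀
        linarith [negContMatrix_one_zero_pos hA₀ h2A₀]
      have hB₀ : B = [] := by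
        by_contra hB₀
        linarith [negContMatrix_zero_one_neg hB₀ h2B₀]
      subst hA₀ hB₀
      exact .refl
    · have hA₀ : A ≠ [] := by
        rintro rfl
        simp only [negContMatrix_nil, Matrix.one_apply_eq] at hp hqr
        nlinarith
      have hb₁ : ∀ x ∈ B ++ [b - 1], 2 ≤ x :=
        List.forall_mem_append.2 ⟨h2B₀, List.forall_mem_singleton.2 (by omega)⟩
      have := ih hA₀ (B := B ++ [b - 1]) (by simp) h2A₀ hb₁
        (by rw [negContMatrix_append_singleton_zero]; linarith)
        (by rw [negContMatrix_append_singleton_one]; linarith) (by push_cast at hn; linarith)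
      simpa using this.expand_right
    · have hB₀ : B ≠ [] := by
        rintro rfl
        simp only [negContMatrix_nil, Matrix.one_apply_eq] at hp hqr
        nlinarith
      have ha₁ : ∀ x ∈ (a - 1) :: A, 2 ≤ x := List.forall_mem_cons.2 ⟨by omega, h2A₀⟩
      have := ih (A := (a - 1) :: A) (by simp) hB₀ ha₁ h2B₀
        (by rw [negContMatrix_cons_zero]; linarith)
        (by rw [negContMatrix_cons_zero, negContMatrix_cons_one]; linarith)
        (by rw [negContMatrix_cons_zero]; push_cast at hn; linarith)
      simpa using this.expand_left
    · -- `a, b ≥ 3` would give `K(A₀), K(B₀) < p / 2`, but they sum to `p`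
      nlinarith

theorem complementary_self_iff {L : List ℤ} (hL : L ≠ []) (h2 : ∀ x ∈ L, 2 ≤ x) :
    Complementary L L ↔ negContMatrix L 1 0 - negContMatrix L 0 1 = negContMatrix L 0 0 :=
  ⟨fun h => h.negContMatrix_eq.2, complementary_of_negContMatrix hL hL h2 h2 rfl⟩

lemma add_eq_iff_sq_modEq_neg_one {p q r t : ℤ} (hdet : p * t + q * r = 1) (hpos : 0 < q + r)
    (hlt : q + r < 2 * p) : q + r = p ↔ q ^ 2 ≡ -1 [ZMOD p] := by
  rw [Int.modEq_iff_dvd]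
  constructor
  · rintro rfl
    exact ⟨-(q + t), by linear_combination hdet⟩
  · rintro ⟨k, hk⟩
    have hcop : IsCoprime p q := ⟨t, r, by linear_combination hdet⟩
    have hdvd : p ∣ q * (q + r - p) := ⟨-k - t - q, by linear_combination hdet - hk⟩
    have := Int.eq_zero_of_abs_lt_dvd (hcop.dvd_of_dvd_mul_left hdvd)
      (abs_lt.2 ⟨by linarith, by linarith⟩)
    linarith

/-- Let `a₁,…,aₙ` (`n ≥ 1`) be integers with each `aᵢ ≥ 2`, and set
`p = K(a₁,…,aₙ)`, `q = K(a₂,…,aₙ)`.  Then the string `(a₁,…,aₙ)` is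
self-complementary if and only if `q² ≡ −1 (mod p)`. -/
theorem stmt9 (L : List ℤ) (hL : L ≠ []) (h2 : ∀ a ∈ L, 2 ≤ a) :
    Complementary L L ↔ (negCont L.tail) ^ 2 ≡ -1 [ZMOD negCont L] := by
  have hdet := det_negContMatrix L
  rw [Matrix.det_fin_two] at hdet
  have hq := negContMatrix_one_zero_pos hL h2
  have hqp := (negContMatrix_one_zero_nonneg_and_lt h2).2
  obtain ⟨hr, hrp⟩ := neg_negContMatrix_zero_one_nonneg_and_lt h2
  rw [complementary_self_iff hL h2, sub_eq_add_neg, ← negContMatrix_zero_zero,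
    ← negContMatrix_one_zero_of_ne_nil hL]
  exact add_eq_iff_sq_modEq_neg_one (t := negContMatrix L 1 1) (by linear_combination hdet)
    (by omega) (by omega)
end

section
/- Let C = (c_1,…,c_k) be an integer string with k ≥ 2 and all entries c_i ≥ 2. Then C is self-complementary if and only if there exists a complementary pair of strings ((a_1,…,a_n),(b_1,…,b_m)) such that either C = (a_1,…,a_n, b_1+1, b_2,…,b_m) or C = (a_1,…,a_{n−1}, a_n+1, b_1,…,b_m). -/
namespace Stmt11Aux

/-- Increment the head of a list. -/
def incH : List ℤ → List ℤ
  | [] => []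
  | a :: t => (a + 1) :: t

/-- Increment the last element of a list. -/
def incL (l : List ℤ) : List ℤ := (incH l.reverse).reverse

@[simp] lemma incH_cons (a : ℤ) (t : List ℤ) : incH (a :: t) = (a + 1) :: t := rfl

@[simp] lemma incL_concat (B : List ℤ) (b : ℤ) : incL (B ++ [b]) = B ++ [b + 1] := by
  simp [incL, incH]

/-- Run a word of moves (`true` = first kind, `false` = second kind). -/
def runW : List Bool → List ℤ × List ℤ → List ℤ × List ℤ
  | [], P => P
  | true :: w, P => runW w (incH P.1, P.2 ++ [2])
  | false :: w, P => runW w (2 :: P.1, incL P.2)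

lemma runW_true (w : List Bool) (P : List ℤ × List ℤ) :
    runW (true :: w) P = runW w (incH P.1, P.2 ++ [2]) := rfl

lemma runW_false (w : List Bool) (P : List ℤ × List ℤ) :
    runW (false :: w) P = runW w (2 :: P.1, incL P.2) := rfl

/-- The "new parts" created by running a word from `(x::X, Y++[y])`. -/
def coreW : List Bool → ℤ → ℤ → List ℤ × List ℤ
  | [], x, y => ([x], [y])
  | true :: w, x, y => ((coreW w (x + 1) 2).1, y :: (coreW w (x + 1) 2).2)
  | false :: w, x, y => ((coreW w 2 (y + 1)).1 ++ [x], (coreW w 2 (y + 1)).2)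

/-- Reversal-with-swap of a word. -/
def revN (w : List Bool) : List Bool := w.reverse.map (fun b => !b)

@[simp] lemma revN_nil : revN [] = [] := rfl

@[simp] lemma revN_concat (w : List Bool) (m : Bool) :
    revN (w ++ [m]) = (!m) :: revN w := by simp [revN]

lemma runW_append (u v : List Bool) (P : List ℤ × List ℤ) :
    runW (u ++ v) P = runW v (runW u P) := by
  induction u generalizing P with
  | nil => rfl
  | cons m u ih => cases m <;> simp [runW, ih]

lemma core_spec (w : List Bool) (x : ℤ) (X : List ℤ) (y : ℤ) (Y : List ℤ) :
    runW w (x :: X, Y ++ [y]) = ((coreW w x y).1 ++ X, Y ++ (coreW w x y).2) := by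
  induction w generalizing x X y Y with
  | nil => simp [runW, coreW]
  | cons m w ih =>
    cases m with
    | true =>
      show runW w ((x + 1) :: X, (Y ++ [y]) ++ [2]) = _
      rw [ih (x + 1) X 2 (Y ++ [y])]
      simp [coreW]
    | false =>
      show runW w (2 :: x :: X, incL (Y ++ [y])) = _
      rw [incL_concat, ih 2 (x :: X) (y + 1) Y]
      simp [coreW]

lemma core_base (w : List Bool) : runW w ([2], [2]) = coreW w 2 2 := by
  have h := core_spec w 2 [] 2 []
  simpa using h

/-- The structure lemma: `coreW w x y` depends on `x`, `y` only through the
last element of the first component and the head of the second. -/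
lemma core_shape (w : List Bool) :
    ∃ (A : List ℤ) (a b : ℤ) (B : List ℤ),
      ∀ x y, coreW w x y = (A ++ [a + x], (b + y) :: B) := by
  induction w with
  | nil => exact ⟨[], 0, 0, [], fun x y => by simp [coreW]⟩
  | cons m w ih =>
    obtain ⟨A, a, b, B, h⟩ := ih
    cases m with
    | true =>
      refine ⟨A, a + 1, 0, (b + 2) :: B, fun x y => ?_⟩
      simp only [coreW, h (x + 1) 2]
      rw [show a + 1 + x = a + (x + 1) by ring, show (0 : ℤ) + y = y by ring]
    | false =>
      refine ⟨A ++ [a + 2], 0, b + 1, B, fun x y => ?_⟩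
      simp only [coreW, h 2 (y + 1)]
      rw [show (0 : ℤ) + x = x by ring, show b + 1 + y = b + (y + 1) by ring]

lemma core_pos (w : List Bool) :
    ∀ x y : ℤ, 2 ≤ x → 2 ≤ y →
      (∀ c ∈ (coreW w x y).1, 2 ≤ c) ∧ (∀ c ∈ (coreW w x y).2, 2 ≤ c) := by
  induction w with
  | nil =>
    intro x y hx hy
    constructor <;> · intro c hc; simp [coreW] at hc; omega
  | cons m w ih =>
    intro x y hx hy
    cases m with
    | true =>
      obtain ⟨h1, h2⟩ := ih (x + 1) 2 (by omega) le_rfl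
      refine ⟨h1, fun c hc => ?_⟩
      simp only [coreW, List.mem_cons] at hc
      rcases hc with rfl | hc
      · exact hy
      · exact h2 c hc
    | false =>
      obtain ⟨h1, h2⟩ := ih 2 (y + 1) le_rfl (by omega)
      refine ⟨fun c hc => ?_, h2⟩
      simp only [coreW, List.mem_append, List.mem_singleton] at hc
      rcases hc with hc | rfl
      · exact h1 c hc
      · exact hx

lemma run_compl (P : List ℤ × List ℤ)
    (h : Relation.ReflTransGen TwoFinalExp ([2], [2]) P) :
    ∃ w : List Bool, coreW w 2 2 = P := by
  induction h with
  | refl => exact ⟨[], by simp [coreW]⟩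
  | @tail Q R hQ hstep ih =>
    obtain ⟨w, hw⟩ := ih
    rcases hstep with ⟨a, A', B', hP, hR⟩ | ⟨A', B', b, hP, hR⟩
    · refine ⟨w ++ [true], ?_⟩
      rw [← core_base, runW_append, core_base, hw, hP, hR]
      simp [runW]
    · refine ⟨w ++ [false], ?_⟩
      rw [← core_base, runW_append, core_base, hw, hP, hR]
      simp [runW]

/-- Complementarity is equivalent to being the result of running some word. -/
lemma compl_iff (A B : List ℤ) :
    Complementary A B ↔ ∃ w : List Bool, coreW w 2 2 = (A, B) := by
  constructor
  · exact run_compl (A, B)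
  · rintro ⟨w, hw⟩
    have key : ∀ v : List Bool, Relation.ReflTransGen TwoFinalExp ([2], [2]) (runW v ([2], [2])) := by
      intro v
      induction v using List.reverseRecOn with
      | nil => exact Relation.ReflTransGen.refl
      | append_singleton v m ih =>
        refine Relation.ReflTransGen.tail ih ?_
        obtain ⟨A', a, b, B', hs⟩ := core_shape v
        have hv : runW v ([2], [2]) = (A' ++ [a + 2], (b + 2) :: B') := by
          rw [core_base, hs 2 2]
        rw [runW_append, hv]
        cases m with
        | true =>
          obtain ⟨h, t, hht⟩ : ∃ h t, A' ++ [a + 2] = h :: t := by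
            cases A' with
            | nil => exact ⟨a + 2, [], rfl⟩
            | cons x l => exact ⟨x, l ++ [a + 2], rfl⟩
          left
          exact ⟨h, t, (b + 2) :: B', by rw [hht], by simp [runW, hht, incH]⟩
        | false =>
          obtain ⟨Y, c, hYc⟩ : ∃ Y c, ((b + 2) :: B' : List ℤ) = Y ++ [c] :=
            match B'.eq_nil_or_concat with
            | Or.inl h => ⟨[], b + 2, by simp [h]⟩
            | Or.inr ⟨l, c, h⟩ => ⟨(b + 2) :: l, c, by simp [h]⟩
          right
          exact ⟨A' ++ [a + 2], Y, c, by rw [hYc], by simp [runW, hYc]⟩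
    have := key w
    rw [core_base, hw] at this
    exact this

/-- Swap lemma: reversing-and-negating a word swaps the resulting pair. -/
lemma core_swap (w : List Bool) :
    coreW (revN w) 2 2 = ((coreW w 2 2).2, (coreW w 2 2).1) := by
  induction w using List.reverseRecOn with
  | nil => simp [coreW]
  | append_singleton w m ih =>
    obtain ⟨A, a, b, B, hs⟩ := core_shape w
    obtain ⟨A', a', b', B', hs'⟩ := core_shape (revN w)
    have hw : coreW w 2 2 = (A ++ [a + 2], (b + 2) :: B) := hs 2 2
    have hrw : coreW (revN w) 2 2 = (A' ++ [a' + 2], (b' + 2) :: B') := hs' 2 2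
    have e1 : A' ++ [a' + 2] = (b + 2) :: B := by
      have h := ih; rw [hrw, hw] at h; exact congrArg Prod.fst h
    have e2 : (b' + 2) :: B' = A ++ [a + 2] := by
      have h := ih; rw [hrw, hw] at h; exact congrArg Prod.snd h
    have hright : coreW (w ++ [m]) 2 2 = runW [m] (A ++ [a + 2], (b + 2) :: B) := by
      rw [← core_base, runW_append, core_base, hw]
    rw [revN_concat]
    cases m with
    | true =>
      simp only [Bool.not_true]
      have hL : coreW (false :: revN w) 2 2 = runW (revN w) ([2, 2], [3]) := by
        rw [← core_base]; rfl
      have hmid : runW (revN w) ([2, 2], [3])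
          = ((coreW (revN w) 2 3).1 ++ [2], (coreW (revN w) 2 3).2) := by
        have h := core_spec (revN w) 2 [2] 3 []
        simpa using h
      rw [hL, hmid, hs' 2 3, hright]
      simp only [runW]
      rw [show (A ++ [a + 2] : List ℤ) = (b' + 2) :: B' from e2.symm]
      simp only [incH_cons]
      rw [e1, show b' + 2 + 1 = b' + 3 by ring]
    | false =>
      simp only [Bool.not_false]
      have hL : coreW (true :: revN w) 2 2 = runW (revN w) ([3], [2, 2]) := by
        rw [← core_base]; rfl
      have hmid : runW (revN w) ([3], [2, 2])
          = ((coreW (revN w) 3 2).1, [2] ++ (coreW (revN w) 3 2).2) := by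
        have h := core_spec (revN w) 3 [] 2 [2]
        simpa using h
      rw [hL, hmid, hs' 3 2, hright]
      simp only [runW]
      rw [show ((b + 2) :: B : List ℤ) = A' ++ [a' + 2] from e1.symm, incL_concat,
        show a' + 2 + 1 = a' + 3 by ring, ← e2]
      rfl

/-- Recovery: the last move can be undone. -/
lemma step_inj (v v' : List Bool) (m : Bool) :
    runW (v ++ [m]) ([2], [2]) = runW (v' ++ [m]) ([2], [2]) →
      runW v ([2], [2]) = runW v' ([2], [2]) := by
  intro h
  obtain ⟨A, a, b, B, hs⟩ := core_shape v
  obtain ⟨A', a', b', B', hs'⟩ := core_shape v'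
  have hv : runW v ([2], [2]) = (A ++ [a + 2], (b + 2) :: B) := by rw [core_base, hs 2 2]
  have hv' : runW v' ([2], [2]) = (A' ++ [a' + 2], (b' + 2) :: B') := by rw [core_base, hs' 2 2]
  rw [runW_append, runW_append, hv, hv'] at h
  cases m with
  | true =>
    simp only [runW] at h
    rw [Prod.mk.injEq] at h
    obtain ⟨h1, h2⟩ := h
    have hB : ((b + 2) :: B : List ℤ) = (b' + 2) :: B' := by
      have h3 := congrArg List.dropLast h2
      rwa [List.dropLast_concat, List.dropLast_concat] at h3
    obtain ⟨x, t, hxt⟩ : ∃ x t, A ++ [a + 2] = x :: t := by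
      cases A with
      | nil => exact ⟨a + 2, [], rfl⟩
      | cons p l => exact ⟨p, l ++ [a + 2], rfl⟩
    obtain ⟨x', t', hxt'⟩ : ∃ x' t', A' ++ [a' + 2] = x' :: t' := by
      cases A' with
      | nil => exact ⟨a' + 2, [], rfl⟩
      | cons p l => exact ⟨p, l ++ [a' + 2], rfl⟩
    rw [hxt, hxt'] at h1
    simp only [incH_cons, List.cons.injEq] at h1
    rw [hv, hv', hB, hxt, hxt', show x = x' by omega, h1.2]
  | false =>
    simp only [runW] at h
    rw [Prod.mk.injEq] at h
    obtain ⟨h1, h2⟩ := h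
    have hA : A ++ [a + 2] = A' ++ [a' + 2] := by
      have h3 := congrArg List.tail h1
      simpa using h3
    obtain ⟨Y, c, hYc⟩ : ∃ Y c, ((b + 2) :: B : List ℤ) = Y ++ [c] :=
      match B.eq_nil_or_concat with
      | Or.inl hB => ⟨[], b + 2, by simp [hB]⟩
      | Or.inr ⟨l, c, hB⟩ => ⟨(b + 2) :: l, c, by simp [hB]⟩
    obtain ⟨Y', c', hYc'⟩ : ∃ Y' c', ((b' + 2) :: B' : List ℤ) = Y' ++ [c'] :=
      match B'.eq_nil_or_concat with
      | Or.inl hB => ⟨[], b' + 2, by simp [hB]⟩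
      | Or.inr ⟨l, c, hB⟩ => ⟨(b' + 2) :: l, c, by simp [hB]⟩
    rw [hYc, hYc', incL_concat, incL_concat] at h2
    have hY : Y = Y' := by
      have h3 := congrArg List.dropLast h2
      rwa [List.dropLast_concat, List.dropLast_concat] at h3
    have hc : c + 1 = c' + 1 := by
      have h3 := congrArg (fun l : List ℤ => l.getLastD 0) h2
      simpa only [List.getLastD_concat] using h3
    rw [hv, hv', hA, hYc, hYc', hY, show c = c' by omega]

lemma run_ne_base (v : List Bool) (m : Bool) : runW (v ++ [m]) ([2], [2]) ≠ ([2], [2]) := by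
  obtain ⟨A, a, b, B, hs⟩ := core_shape v
  have hv : runW v ([2], [2]) = (A ++ [a + 2], (b + 2) :: B) := by rw [core_base, hs 2 2]
  rw [runW_append, hv]
  cases m with
  | true =>
    simp only [runW]
    intro h
    rw [Prod.mk.injEq] at h
    have h2 := congrArg List.length h.2
    simp only [List.length_append, List.length_cons, List.length_singleton,
      List.length_nil] at h2
    omega
  | false =>
    simp only [runW]
    intro h
    rw [Prod.mk.injEq] at h
    have h1 := congrArg List.length h.1
    simp only [List.length_append, List.length_cons, List.length_singleton,
      List.length_nil] at h1
    omega

/-- Uniqueness of the word. -/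
lemma word_unique (w : List Bool) : ∀ w' : List Bool,
    runW w ([2], [2]) = runW w' ([2], [2]) → w = w' := by
  induction w using List.reverseRecOn with
  | nil =>
    intro w' h
    rcases w'.eq_nil_or_concat with rfl | ⟨v, m, rfl⟩
    · rfl
    · rw [List.concat_eq_append] at h
      exact absurd h.symm (run_ne_base v m)
  | append_singleton v m ih =>
    intro w' h
    rcases w'.eq_nil_or_concat with rfl | ⟨v', m', rfl⟩
    · exact absurd h (run_ne_base v m)
    · rw [List.concat_eq_append] at h ⊢
      have hmm : m = m' := by
        obtain ⟨A, a, b, B, hs⟩ := core_shape v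
        obtain ⟨A', a', b', B', hs'⟩ := core_shape v'
        have hv : runW v ([2], [2]) = (A ++ [a + 2], (b + 2) :: B) := by rw [core_base, hs 2 2]
        have hv' : runW v' ([2], [2]) = (A' ++ [a' + 2], (b' + 2) :: B') := by
          rw [core_base, hs' 2 2]
        have hpos := core_pos v 2 2 le_rfl le_rfl
        rw [hs 2 2] at hpos
        have hpos' := core_pos v' 2 2 le_rfl le_rfl
        rw [hs' 2 2] at hpos'
        have key : ∀ (b₁ : ℤ) (B₁ : List ℤ), (∀ c ∈ ((b₁ + 2) :: B₁ : List ℤ), 2 ≤ c) →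
            3 ≤ (incL ((b₁ + 2) :: B₁)).getLastD 0 := by
          intro b₁ B₁ hp
          obtain ⟨Y, c, hYc⟩ : ∃ Y c, ((b₁ + 2) :: B₁ : List ℤ) = Y ++ [c] :=
            match B₁.eq_nil_or_concat with
            | Or.inl hB => ⟨[], b₁ + 2, by simp [hB]⟩
            | Or.inr ⟨l, c, hB⟩ => ⟨(b₁ + 2) :: l, c, by simp [hB]⟩
          have hc : 2 ≤ c := hp c (by rw [hYc]; simp)
          rw [hYc, incL_concat, List.getLastD_concat]
          omega
        rw [runW_append, runW_append, hv, hv'] at h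
        cases m with
        | true =>
          cases m' with
          | true => rfl
          | false =>
            exfalso
            simp only [runW] at h
            rw [Prod.mk.injEq] at h
            have h3 := congrArg (fun l : List ℤ => l.getLastD 0) h.2
            simp only [List.getLastD_concat] at h3
            have h4 := key b' B' hpos'.2
            omega
        | false =>
          cases m' with
          | false => rfl
          | true =>
            exfalso
            simp only [runW] at h
            rw [Prod.mk.injEq] at h
            have h3 := congrArg (fun l : List ℤ => l.getLastD 0) h.2
            simp only [List.getLastD_concat] at h3
            have h4 := key b B hpos.2
            omega
      subst hmm
      rw [ih v' (step_inj v v' m h)]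

/-- Glue lemma I. -/
lemma glueI (u : List Bool) (P : List ℤ) (q : ℤ) (B : List ℤ)
    (h : coreW u 2 2 = (P, q :: B)) :
    coreW (revN u ++ true :: false :: u) 2 2 = (P ++ (q + 1) :: B, P ++ (q + 1) :: B) := by
  obtain ⟨A, a, b, B₀, hs⟩ := core_shape u
  have h22 : (A ++ [a + 2], (b + 2) :: B₀) = (P, q :: B) := by rw [← hs 2 2, h]
  rw [Prod.mk.injEq] at h22
  have hP : A ++ [a + 2] = P := h22.1
  have hq : b + 2 = q := (List.cons.injEq .. ▸ h22.2).1
  have hB : B₀ = B := (List.cons.injEq .. ▸ h22.2).2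
  have hswap : runW (revN u) ([2], [2]) = (q :: B, P) := by
    rw [core_base, core_swap, h]
  rw [← core_base, runW_append, hswap, runW_true, runW_false]
  simp only [incH_cons]
  rw [show incL (P ++ [(2 : ℤ)]) = P ++ [3] by rw [incL_concat]; norm_num]
  rw [core_spec u 2 ((q + 1) :: B) 3 P, hs 2 3, hP]
  rw [show b + 3 = q + 1 by omega, hB]

/-- Glue lemma II. -/
lemma glueII (u : List Bool) (A : List ℤ) (p : ℤ) (Q : List ℤ)
    (h : coreW u 2 2 = (A ++ [p], Q)) :
    coreW (revN u ++ false :: true :: u) 2 2 = (A ++ (p + 1) :: Q, A ++ (p + 1) :: Q) := by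
  obtain ⟨A₀, a, b, B₀, hs⟩ := core_shape u
  have h22 : (A₀ ++ [a + 2], (b + 2) :: B₀) = (A ++ [p], Q) := by rw [← hs 2 2, h]
  rw [Prod.mk.injEq] at h22
  have hA : A₀ = A := by
    have h3 := congrArg List.dropLast h22.1
    rwa [List.dropLast_concat, List.dropLast_concat] at h3
  have hp : a + 2 = p := by
    have h3 := congrArg (fun l : List ℤ => l.getLastD 0) h22.1
    simpa only [List.getLastD_concat] using h3
  have hQ : ((b + 2) :: B₀ : List ℤ) = Q := h22.2
  have hswap : runW (revN u) ([2], [2]) = (Q, A ++ [p]) := by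
    rw [core_base, core_swap, h]
  rw [← core_base, runW_append, hswap, runW_false, runW_true]
  simp only [incH_cons, incL_concat]
  rw [show (2 : ℤ) + 1 = 3 by norm_num]
  rw [core_spec u 3 Q 2 (A ++ [p + 1]), hs 3 2, hA, show a + 3 = p + 1 by omega, hQ]
  simp

end Stmt11Aux

open Stmt11Aux in
/-- Let `C = (c₁,…,c_k)` be an integer string with `k ≥ 2` and all entries
`cᵢ ≥ 2`.  Then `C` is self-complementary if and only if there exists a
complementary pair `((a₁,…,aₙ),(b₁,…,bₘ))` such that either
`C = (a₁,…,aₙ, b₁+1, b₂,…,bₘ)` or `C = (a₁,…,aₙ₋₁, aₙ+1, b₁,…,bₘ)`. -/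
theorem stmt11 (C : List ℤ) (hlen : 2 ≤ C.length) (h2 : ∀ c ∈ C, 2 ≤ c) :
    Complementary C C ↔
      (∃ (A : List ℤ) (b : ℤ) (B' : List ℤ),
        Complementary A (b :: B') ∧ C = A ++ (b + 1) :: B') ∨
      (∃ (A' : List ℤ) (a : ℤ) (B : List ℤ),
        Complementary (A' ++ [a]) B ∧ C = A' ++ (a + 1) :: B) := by
  constructor
  · intro h
    obtain ⟨w, hw⟩ := (compl_iff C C).1 h
    -- w is nonempty
    have hwne : w ≠ [] := by
      rintro rfl
      simp only [coreW] at hw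
      have h1 := congrArg (fun p : List ℤ × List ℤ => p.1.length) hw
      simp at h1
      omega
    -- w is antipalindromic
    have hap : w = revN w := by
      apply word_unique
      rw [core_base, core_base, hw, core_swap w, hw]
    -- counting: the length of w is twice the number of `true`s
    have hcnt1 : ∀ v : List Bool, (v.map (fun b => !b)).count true = v.count false := by
      intro v
      induction v with
      | nil => rfl
      | cons x t ihv => cases x <;> simp [List.count_cons, ihv]
    have hcnt2 : ∀ v : List Bool, v.count true + v.count false = v.length := by
      intro v
      induction v with
      | nil => rfl
      | cons x t ihv => cases x <;> simp [List.count_cons] <;> omega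
    have hcount : w.length = 2 * w.count true := by
      have h1 : (revN w).count true = w.count false := by
        unfold revN
        rw [hcnt1 w.reverse, List.count_reverse]
      have h3 : w.count true = w.count false := by
        conv_lhs => rw [hap]
        exact h1
      have h4 := hcnt2 w
      omega
    set t := w.count true with ht
    have htpos : 1 ≤ t := by
      rcases Nat.eq_zero_or_pos t with h0 | h1
      · exfalso
        apply hwne
        rw [← List.length_eq_zero_iff]
        omega
      · exact h1
    -- split w as revN (drop t w) ++ drop t w
    have htake : List.take t w = revN (w.drop t) := by
      conv_lhs => rw [hap]
      unfold revN
      rw [← List.map_take]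
      congr 1
      rw [List.reverse_drop, show w.length - t = t by omega]
    have hsplit : w = revN (w.drop t) ++ w.drop t := by
      conv_lhs => rw [← List.take_append_drop t w]
      rw [htake]
    have hdne : w.drop t ≠ [] := by
      intro hnil
      have := congrArg List.length hnil
      simp at this
      omega
    obtain ⟨m, u, hmu⟩ : ∃ m u, w.drop t = m :: u := by
      cases hd : w.drop t with
      | nil => exact absurd hd hdne
      | cons m u => exact ⟨m, u, rfl⟩
    have hrevcons : revN (m :: u) = revN u ++ [!m] := by simp [revN]
    have hw2 : w = revN u ++ (!m) :: m :: u := by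
      conv_lhs => rw [hsplit, hmu]
      rw [hrevcons, List.append_assoc]
      rfl
    obtain ⟨A, a, b, B, hs⟩ := core_shape u
    have hcompl : Complementary (A ++ [a + 2]) ((b + 2) :: B) :=
      (compl_iff _ _).2 ⟨u, hs 2 2⟩
    cases m with
    | false =>
      have hg := glueI u (A ++ [a + 2]) (b + 2) B (hs 2 2)
      rw [hw2] at hw
      simp only [Bool.not_false] at hw
      rw [hg] at hw
      left
      refine ⟨A ++ [a + 2], b + 2, B, hcompl, ?_⟩
      rw [Prod.mk.injEq] at hw
      exact hw.1.symm
    | true =>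
      have hg := glueII u A (a + 2) ((b + 2) :: B) (by rw [hs 2 2])
      rw [hw2] at hw
      simp only [Bool.not_true] at hw
      rw [hg] at hw
      right
      refine ⟨A, a + 2, (b + 2) :: B, hcompl, ?_⟩
      rw [Prod.mk.injEq] at hw
      exact hw.1.symm
  · rintro (⟨A, b, B', hcompl, hC⟩ | ⟨A', a, B, hcompl, hC⟩)
    · obtain ⟨u, hu⟩ := (compl_iff _ _).1 hcompl
      apply (compl_iff C C).2
      refine ⟨revN u ++ true :: false :: u, ?_⟩
      rw [glueI u A b B' hu, hC]
    · obtain ⟨u, hu⟩ := (compl_iff _ _).1 hcompl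
      apply (compl_iff C C).2
      refine ⟨revN u ++ false :: true :: u, ?_⟩
      rw [glueII u A' a B hu, hC]
end

section
/- If a string A is self-complementary, then any string obtained from A by a single-string 2-final expansion is again self-complementary; consequently, every string obtained from (2,3) or from (3,2) by a finite sequence of single-string 2-final expansions is self-complementary. -/
/-- A single-string 2-final expansion transforms `(a₁,…,aₙ)` into either
`(a₁+1, a₂,…,aₙ, 2)` or `(2, a₁,…,aₙ₋₁, aₙ+1)`. -/
def TwoFinalExp1 : List ℤ → List ℤ → Prop := fun A A' =>
  (∃ (a : ℤ) (l : List ℤ), A = a :: l ∧ A' = (a + 1) :: (l ++ [2])) ∨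
  (∃ (l : List ℤ) (b : ℤ), A = l ++ [b] ∧ A' = 2 :: (l ++ [b + 1]))

namespace Stmt12Aux

def stepL (l : List ℤ) (b : Bool) : List ℤ :=
  match b, l with
  | true, a :: t => (a + 1) :: t
  | true, [] => []
  | false, l => 2 :: l

def stepR (l : List ℤ) (b : Bool) : List ℤ := (stepL l.reverse b).reverse

@[simp] lemma stepL_false (l : List ℤ) : stepL l false = 2 :: l := rfl
@[simp] lemma stepL_true_cons (a : ℤ) (t : List ℤ) : stepL (a :: t) true = (a + 1) :: t := rfl

@[simp] lemma stepR_false (l : List ℤ) : stepR l false = l ++ [2] := by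
  simp [stepR, stepL]

@[simp] lemma stepR_true_concat (t : List ℤ) (b : ℤ) : stepR (t ++ [b]) true = t ++ [b + 1] := by
  simp [stepR, stepL]

lemma stepL_ne_nil {l : List ℤ} (h : l ≠ []) (b : Bool) : stepL l b ≠ [] := by
  cases b
  · simp [stepL]
  · cases l with
    | nil => exact absurd rfl h
    | cons a t => simp [stepL]

lemma comm {l : List ℤ} (h : l ≠ []) (σ τ : Bool) :
    stepL (stepR l τ) σ = stepR (stepL l σ) τ := by
  rcases l.eq_nil_or_concat with rfl | ⟨t, b, rfl⟩
  · exact absurd rfl h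
  rcases t with _ | ⟨a, m⟩
  · cases σ <;> cases τ <;> simp [stepR, stepL]
  · cases σ <;> cases τ <;> simp [stepR, stepL, List.reverse_append]

lemma foldl_ne_nil (u : List Bool) : ∀ {l : List ℤ}, l ≠ [] → u.foldl stepL l ≠ [] := by
  induction u with
  | nil => intro l h; exact h
  | cons σ u ih => intro l h; exact ih (stepL_ne_nil h σ)

lemma comm_fold (u : List Bool) : ∀ {l : List ℤ}, l ≠ [] → ∀ σ : Bool,
    stepR (u.foldl stepL l) σ = u.foldl stepL (stepR l σ) := by
  induction u with
  | nil => intro l h σ; rfl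
  | cons τ u ih =>
    intro l h σ
    simp only [List.foldl_cons]
    rw [ih (stepL_ne_nil h τ) σ, ← comm h τ σ]

def run1 (w : List Bool) : List ℤ := w.foldl stepL [2]

def run2 (w : List Bool) : List ℤ := (run1 (w.map not)).reverse

lemma run1_ne_nil (w : List Bool) : run1 w ≠ [] := foldl_ne_nil w (by simp)

lemma run2_ne_nil (w : List Bool) : run2 w ≠ [] := by
  simp [run2, run1_ne_nil]

lemma run1_append (w : List Bool) (σ : Bool) : run1 (w ++ [σ]) = stepL (run1 w) σ := by
  simp [run1]

lemma stepR_two (σ : Bool) : stepR [2] σ = stepL [2] σ := by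
  cases σ <;> simp [stepR, stepL]

lemma run1_reverse (w : List Bool) : run1 w.reverse = (run1 w).reverse := by
  induction w with
  | nil => rfl
  | cons σ u ih =>
    have h2 : ([2] : List ℤ) ≠ [] := by simp
    calc run1 ((σ :: u).reverse) = run1 (u.reverse ++ [σ]) := by simp
      _ = stepL (run1 u.reverse) σ := run1_append _ _
      _ = stepL (run1 u).reverse σ := by rw [ih]
      _ = (stepR (run1 u) σ).reverse := by simp [stepR]
      _ = (u.foldl stepL (stepR [2] σ)).reverse := by rw [show stepR (run1 u) σ = u.foldl stepL (stepR [2] σ) from comm_fold u h2 σ]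
      _ = (u.foldl stepL (stepL [2] σ)).reverse := by rw [stepR_two]
      _ = (run1 (σ :: u)).reverse := rfl

lemma run2_append (w : List Bool) (σ : Bool) : run2 (w ++ [σ]) = stepR (run2 w) (!σ) := by
  simp [run2, run1_append, stepR]

lemma compl_run (w : List Bool) : Complementary (run1 w) (run2 w) := by
  induction w using List.reverseRecOn with
  | nil =>
    have h1 : run1 ([] : List Bool) = [2] := rfl
    have h2 : run2 ([] : List Bool) = [2] := rfl
    rw [h1, h2]
    exact Relation.ReflTransGen.refl
  | append_singleton w σ ih =>
    refine Relation.ReflTransGen.tail ih ?_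
    cases σ
    · rcases (run2 w).eq_nil_or_concat with h | ⟨B₀, b, hB⟩
      · exact absurd h (run2_ne_nil w)
      · rw [List.concat_eq_append] at hB
        refine Or.inr ⟨run1 w, B₀, b, by rw [hB], ?_⟩
        rw [run1_append, run2_append, hB]
        simp
    · rcases hA : run1 w with _ | ⟨a, t⟩
      · exact absurd hA (run1_ne_nil w)
      · refine Or.inl ⟨a, t, run2 w, rfl, ?_⟩
        rw [run1_append, run2_append, hA]
        simp

lemma compl_char {A B : List ℤ} (h : Complementary A B) :
    ∃ w : List Bool, A = run1 w ∧ B = run2 w := by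
  unfold Complementary at h
  generalize hp : (A, B) = p at h
  suffices hs : ∃ w, p = (run1 w, run2 w) by
    obtain ⟨w, hw⟩ := hs
    rw [← hp] at hw
    exact ⟨w, by simpa using congrArg Prod.fst hw, by simpa using congrArg Prod.snd hw⟩
  clear hp
  induction h with
  | refl => exact ⟨[], rfl⟩
  | tail h step ih =>
    obtain ⟨w, rfl⟩ := ih
    rcases step with ⟨a, A', B', hP, hQ⟩ | ⟨A', B', b, hP, hQ⟩
    · have h1 : run1 w = a :: A' := congrArg Prod.fst hP
      have h2 : run2 w = B' := congrArg Prod.snd hP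
      refine ⟨w ++ [true], ?_⟩
      rw [hQ, run1_append, run2_append, h1, h2]
      simp
    · have h1 : run1 w = A' := congrArg Prod.fst hP
      have h2 : run2 w = B' ++ [b] := congrArg Prod.snd hP
      refine ⟨w ++ [false], ?_⟩
      rw [hQ, run1_append, run2_append, h1, h2]
      simp

lemma compl_symm {A B : List ℤ} (h : Complementary A B) : Complementary B A := by
  obtain ⟨w, rfl, rfl⟩ := compl_char h
  have h1 : run1 ((w.map not).reverse) = run2 w := by
    rw [run1_reverse]; rfl
  have h2 : run2 ((w.map not).reverse) = run1 w := by
    have hnn : (not ∘ not) = id := by funext x; simp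
    have : ((w.map not).reverse).map not = w.reverse := by
      rw [← List.map_reverse, List.map_map, hnn, List.map_id]
    rw [run2, this, run1_reverse, List.reverse_reverse]
  have := compl_run ((w.map not).reverse)
  rwa [h1, h2] at this

lemma part1 {A A' : List ℤ} (h : Complementary A A) (h' : TwoFinalExp1 A A') :
    Complementary A' A' := by
  rcases h' with ⟨a, l, rfl, rfl⟩ | ⟨l, b, rfl, rfl⟩
  · have s1 : Complementary ((a + 1) :: l) ((a :: l) ++ [2]) :=
      h.tail (Or.inl ⟨a, l, a :: l, rfl, rfl⟩)
    have s2 := compl_symm s1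
    have s3 : Complementary ((a + 1) :: (l ++ [2])) (((a + 1) :: l) ++ [2]) :=
      s2.tail (Or.inl ⟨a, l ++ [2], (a + 1) :: l, by simp, rfl⟩)
    simpa using s3
  · have s1 : Complementary (2 :: (l ++ [b])) (l ++ [b + 1]) :=
      h.tail (Or.inr ⟨l ++ [b], l, b, rfl, rfl⟩)
    have s2 := compl_symm s1
    have s3 : Complementary (2 :: (l ++ [b + 1])) ((2 :: l) ++ [b + 1]) :=
      s2.tail (Or.inr ⟨l ++ [b + 1], 2 :: l, b, by simp, rfl⟩)
    simpa using s3

lemma compl_23 : Complementary [2, 3] [2, 3] := by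
  have s1 : TwoFinalExp ([2], [2]) ([3], [2, 2]) := Or.inl ⟨2, [], [2], rfl, by norm_num⟩
  have s2 : TwoFinalExp ([3], [2, 2]) ([2, 3], [2, 3]) := Or.inr ⟨[3], [2], 2, by norm_num, by norm_num⟩
  exact (Relation.ReflTransGen.refl.tail s1).tail s2

lemma compl_32 : Complementary [3, 2] [3, 2] := by
  have s1 : TwoFinalExp ([2], [2]) ([2, 2], [3]) := Or.inr ⟨[2], [], 2, by norm_num, by norm_num⟩
  have s2 : TwoFinalExp ([2, 2], [3]) ([3, 2], [3, 2]) := Or.inl ⟨2, [2], [3], rfl, by norm_num⟩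
  exact (Relation.ReflTransGen.refl.tail s1).tail s2

end Stmt12Aux

open Stmt12Aux in
/-- If a string `A` is self-complementary, then any string obtained from `A` by a
single-string 2-final expansion is again self-complementary; consequently, every
string obtained from `(2,3)` or from `(3,2)` by a finite sequence of
single-string 2-final expansions is self-complementary. -/
theorem stmt12 :
    (∀ A A' : List ℤ, Complementary A A → TwoFinalExp1 A A' → Complementary A' A') ∧
    (∀ C : List ℤ,
      (Relation.ReflTransGen TwoFinalExp1 [2, 3] C ∨
        Relation.ReflTransGen TwoFinalExp1 [3, 2] C) →
      Complementary C C) := by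
  constructor
  · exact fun A A' h h' => part1 h h'
  · intro C h
    rcases h with h | h
    · induction h with
      | refl => exact compl_23
      | tail h' step ih => exact part1 ih step
    · induction h with
      | refl => exact compl_32
      | tail h' step ih => exact part1 ih step
end

section
/- Let C = (c_1,…,c_k) be a self-complementary integer string with k ≥ 2. Then c_1 = 2 or c_k = 2; moreover, if c_1 = 2 then the string (c_2,…,c_{k−1}, c_k − 1) is self-complementary, and if c_k = 2 then the string (c_1 − 1, c_2,…,c_{k−1}) is self-complementary. -/
/-!
If `C = (2, c₂, …, c_k)` is self-complementary, the last expansion producing `(C, C)` cannot be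
of the first kind (it would make `c₁ ≥ 3`), so `(C, C)` comes from
`((c₂, …, c_k), (2, c₂, …, c_k - 1))`. A complementary pair `(A, 2 :: B)` with `B` nonempty must
start with the expansion `([2], [2]) → ([3], [2, 2])`, and the map
`(A, B) ↦ (A with its last entry raised by 1, 2 :: B)` intertwines 2-final expansions, so such a
pair is the image of a complementary pair `(A₀, B)`. For the pair above this makes
`(c₂, …, c_k - 1)` self-complementary. The case `c_k = 2` follows from the symmetry
`(A, B) ↦ (reverse B, reverse A)` of 2-final expansions.
-/

open Relation

theorem List.modifyLast_cons {α : Type*} (f : α → α) (a : α) (l : List α) :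
    (a :: l).modifyLast f = (if l = [] then f a else a) :: l.modifyLast f := by
  cases l with
  | nil => rfl
  | cons b t => simpa using List.modifyLast_append_of_right_ne_nil f [a] (b :: t) (by simp)

namespace TwoFinalExp

theorem swap_reverse {P Q : List ℤ × List ℤ} (h : TwoFinalExp P Q) :
    TwoFinalExp (P.2.reverse, P.1.reverse) (Q.2.reverse, Q.1.reverse) := by
  rcases h with ⟨a, A, B, rfl, rfl⟩ | ⟨A, B, b, rfl, rfl⟩
  · exact Or.inr ⟨B.reverse, A.reverse, a, by simp, by simp⟩
  · exact Or.inl ⟨b, B.reverse, A.reverse, by simp, by simp⟩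

theorem snd_head_le {P Q : List ℤ × List ℤ} (h : TwoFinalExp P Q) {b : ℤ} {B : List ℤ}
    (hP : P.2 = b :: B) : ∃ b' B', Q.2 = b' :: B' ∧ b ≤ b' := by
  rcases h with ⟨a, A', B', rfl, rfl⟩ | ⟨A', B', b', rfl, rfl⟩
  · obtain rfl : B' = b :: B := hP
    exact ⟨b, B ++ [2], rfl, le_rfl⟩
  · cases B' with
    | nil =>
      obtain ⟨rfl, -⟩ := List.cons.inj hP
      exact ⟨b' + 1, [], rfl, by omega⟩
    | cons c T =>
      obtain ⟨rfl, -⟩ := List.cons.inj hP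
      exact ⟨c, T ++ [b' + 1], rfl, le_rfl⟩

end TwoFinalExp

theorem Relation.ReflTransGen.snd_head_le_of_twoFinalExp {P Q : List ℤ × List ℤ}
    (h : ReflTransGen TwoFinalExp P Q) {b : ℤ} {B : List ℤ} (hP : P.2 = b :: B) :
    ∃ b' B', Q.2 = b' :: B' ∧ b ≤ b' := by
  induction h with
  | refl => exact ⟨b, B, hP, le_rfl⟩
  | tail _ hstep ih =>
    obtain ⟨c, C, hc, hbc⟩ := ih
    obtain ⟨c', C', hc', hcc'⟩ := hstep.snd_head_le hc
    exact ⟨c', C', hc', hbc.trans hcc'⟩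

namespace Complementary

variable {A B : List ℤ}

theorem reverse (h : Complementary A B) : Complementary B.reverse A.reverse := by
  simpa [Complementary, Function.onFun] using
    h.lift (fun P : List ℤ × List ℤ => (P.2.reverse, P.1.reverse)) fun _ _ =>
      TwoFinalExp.swap_reverse

theorem ne_nil_s13 (h : Complementary A B) : A ≠ [] ∧ B ≠ [] := by
  suffices ∀ P, ReflTransGen TwoFinalExp ([2], [2]) P → P.1 ≠ [] ∧ P.2 ≠ [] from this _ h
  intro P hP
  induction hP with
  | refl => simp
  | tail _ hstep _ => rcases hstep with ⟨_, _, _, _, rfl⟩ | ⟨_, _, _, _, rfl⟩ <;> simp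

theorem two_le_of_mem_left (h : Complementary A B) : ∀ x ∈ A, 2 ≤ x := by
  suffices ∀ P, ReflTransGen TwoFinalExp ([2], [2]) P → ∀ x ∈ P.1, 2 ≤ x from this _ h
  intro P hP
  induction hP with
  | refl => simp
  | tail _ hstep ih =>
    rcases hstep with ⟨a, A', B', rfl, rfl⟩ | ⟨A', B', b, rfl, rfl⟩ <;>
      simp only [List.forall_mem_cons] at ih ⊢
    · exact ⟨by omega, ih.2⟩
    · exact ⟨le_rfl, ih⟩

theorem head_eq_two_or_getLast_eq_two (h : Complementary A B) :
    A.head? = some 2 ∨ B.getLast? = some 2 := by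
  rcases ReflTransGen.cases_tail h with heq | ⟨P, -, hstep⟩
  · obtain ⟨rfl, -⟩ := Prod.mk.inj heq.symm
    simp
  · rcases hstep with ⟨a, A', B', -, heq⟩ | ⟨A', B', b, -, heq⟩ <;>
      obtain ⟨rfl, rfl⟩ := Prod.mk.inj heq <;> simp

end Complementary

def twoInitialExp (P : List ℤ × List ℤ) : List ℤ × List ℤ :=
  (P.1.modifyLast (· + 1), 2 :: P.2)

theorem TwoFinalExp.exists_of_twoInitialExp {P Q : List ℤ × List ℤ} (hA : P.1 ≠ [])
    (hB : P.2 ≠ []) (h : TwoFinalExp (twoInitialExp P) Q) :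
    ∃ P', TwoFinalExp P P' ∧ Q = twoInitialExp P' := by
  obtain ⟨A₀, B₀⟩ := P
  rcases h with ⟨a, A', B', hP, rfl⟩ | ⟨A', B', b, hP, rfl⟩
  · obtain ⟨x, T, rfl⟩ := List.exists_cons_of_ne_nil hA
    simp only [twoInitialExp, List.modifyLast_cons, Prod.mk.injEq, List.cons.injEq] at hP
    obtain ⟨⟨rfl, rfl⟩, rfl⟩ := hP
    refine ⟨((x + 1) :: T, B₀ ++ [2]), Or.inl ⟨x, T, B₀, rfl, rfl⟩, ?_⟩
    simp only [twoInitialExp, List.modifyLast_cons, List.cons_append]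
    split_ifs <;> rfl
  · obtain ⟨B₂, b₀, rfl⟩ := (List.eq_nil_or_concat' B₀).resolve_left hB
    simp only [twoInitialExp, Prod.mk.injEq] at hP
    obtain ⟨rfl, hB'⟩ := hP
    obtain ⟨rfl, hb⟩ := List.append_inj' (s₁ := 2 :: B₂) hB' rfl
    obtain rfl : b₀ = b := by simpa using hb
    refine ⟨(2 :: A₀, B₂ ++ [b₀ + 1]), Or.inr ⟨A₀, B₂, b₀, rfl, rfl⟩, ?_⟩
    simp [twoInitialExp, List.modifyLast_cons, hA]

theorem Relation.ReflTransGen.exists_complementary_of_twoInitialExp {P Q : List ℤ × List ℤ}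
    (hP : Complementary P.1 P.2) (h : ReflTransGen TwoFinalExp (twoInitialExp P) Q) :
    ∃ P', Complementary P'.1 P'.2 ∧ Q = twoInitialExp P' := by
  induction h with
  | refl => exact ⟨P, hP, rfl⟩
  | tail _ hstep ih =>
    obtain ⟨P', hP', rfl⟩ := ih
    obtain ⟨P'', hstep', rfl⟩ := hstep.exists_of_twoInitialExp hP'.ne_nil_s13.1 hP'.ne_nil_s13.2
    exact ⟨P'', hP'.tail hstep', rfl⟩

namespace Complementary

variable {A B : List ℤ}

theorem exists_of_snd_eq_two_cons (h : Complementary A (2 :: B)) (hB : B ≠ []) :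
    ∃ A₀, Complementary A₀ B ∧ A = A₀.modifyLast (· + 1) := by
  rcases ReflTransGen.cases_head h with heq | ⟨P, hstep, hrest⟩
  · simp [hB] at heq
  rcases hstep with ⟨a, A', B', h₀, rfl⟩ | ⟨A', B', b, h₀, rfl⟩
  · simp only [Prod.mk.injEq, List.cons.injEq] at h₀
    obtain ⟨⟨rfl, rfl⟩, rfl⟩ := h₀
    obtain ⟨⟨A₀, B₀⟩, h₀, hP⟩ :=
      hrest.exists_complementary_of_twoInitialExp (P := ([2], [2])) ReflTransGen.refl
    simp only [twoInitialExp, Prod.mk.injEq, List.cons.injEq] at hP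
    obtain ⟨rfl, -, rfl⟩ := hP
    exact ⟨A₀, h₀, rfl⟩
  · -- from `([2, 2], [3])` on, the second string starts with an entry `≥ 3`
    obtain ⟨rfl, hB'⟩ := Prod.mk.inj h₀
    obtain ⟨rfl, hb⟩ := List.append_inj' (s₁ := []) hB' rfl
    obtain rfl : b = 2 := by simpa [eq_comm] using hb
    obtain ⟨b', B', hb', h3⟩ := hrest.snd_head_le_of_twoFinalExp (b := 2 + 1) rfl
    obtain ⟨rfl, -⟩ := List.cons.inj hb'
    omega

theorem of_fst_eq_two_cons {b : ℤ} (h : Complementary (2 :: A) (B ++ [b + 1])) (hA : A ≠ []) :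
    Complementary A (B ++ [b]) := by
  rcases ReflTransGen.cases_tail h with heq | ⟨P, hrest, hstep⟩
  · simp [hA] at heq
  rcases hstep with ⟨a, A', B', rfl, h₁⟩ | ⟨A', B', b', rfl, h₁⟩
  · have ha : 2 ≤ a := two_le_of_mem_left hrest a (by simp)
    simp only [Prod.mk.injEq, List.cons.injEq] at h₁
    omega
  · simp only [Prod.mk.injEq, List.cons.injEq] at h₁
    obtain ⟨⟨-, rfl⟩, hB⟩ := h₁
    obtain ⟨rfl, hb⟩ := List.append_inj' hB rfl
    obtain rfl : b = b' := by simpa using hb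
    exact hrest

theorem self_of_two_cons {L : List ℤ} {c : ℤ}
    (h : Complementary (2 :: (L ++ [c + 1])) (2 :: (L ++ [c + 1]))) :
    Complementary (L ++ [c]) (L ++ [c]) := by
  have h₁ : Complementary (L ++ [c + 1]) (2 :: (L ++ [c])) :=
    of_fst_eq_two_cons (B := 2 :: L) h (by simp)
  obtain ⟨A₀, h₀, hA⟩ := h₁.exists_of_snd_eq_two_cons (by simp)
  obtain ⟨L', ℓ, rfl⟩ := (List.eq_nil_or_concat' A₀).resolve_left h₀.ne_nil_s13.1
  rw [List.modifyLast_concat] at hA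
  obtain ⟨rfl, hℓ⟩ := List.append_inj' hA rfl
  obtain rfl : c = ℓ := by simpa using hℓ
  exact h₀

end Complementary

theorem stmt13_general (C : List ℤ) (hC : Complementary C C) :
    (C.head? = some 2 ∨ C.getLast? = some 2) ∧
    (∀ (mid : List ℤ) (ck : ℤ), C = 2 :: (mid ++ [ck]) →
      Complementary (mid ++ [ck - 1]) (mid ++ [ck - 1])) ∧
    (∀ (c₁ : ℤ) (mid : List ℤ), C = (c₁ :: mid) ++ [2] →
      Complementary ((c₁ - 1) :: mid) ((c₁ - 1) :: mid)) := by
  refine ⟨hC.head_eq_two_or_getLast_eq_two, ?_, ?_⟩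
  · rintro mid ck rfl
    exact Complementary.self_of_two_cons (by simpa using hC)
  · rintro c₁ mid rfl
    have := Complementary.self_of_two_cons (L := mid.reverse) (c := c₁ - 1)
      (by simpa using hC.reverse)
    simpa using this.reverse

/-- Let `C = (c₁,…,c_k)` be a self-complementary string with `k ≥ 2`.  Then
`c₁ = 2` or `c_k = 2`; moreover, if `c₁ = 2` then `(c₂,…,c_k₋₁, c_k − 1)` is
self-complementary, and if `c_k = 2` then `(c₁ − 1, c₂,…,c_k₋₁)` is
self-complementary. -/
theorem stmt13 (C : List ℤ) (hlen : 2 ≤ C.length) (hC : Complementary C C) :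
    (C.head? = some 2 ∨ C.getLast? = some 2) ∧
    (∀ (mid : List ℤ) (ck : ℤ), C = 2 :: (mid ++ [ck]) →
      Complementary (mid ++ [ck - 1]) (mid ++ [ck - 1])) ∧
    (∀ (c₁ : ℤ) (mid : List ℤ), C = (c₁ :: mid) ++ [2] →
      Complementary ((c₁ - 1) :: mid) ((c₁ - 1) :: mid)) :=
  stmt13_general C hC
end

section
/- Let k ≥ 1, let c_0, c_1, …, c_k be integers with c_i ≥ 0, and let d_1, …, d_k be integers with d_i ≥ 3. Write [2]^m for the string consisting of m copies of 2. Let A be the concatenation [2]^{c_0}, d_1, [2]^{c_1}, d_2, …, d_k, [2]^{c_k}, and let B be the concatenation c_k+2, [2]^{d_k−3}, c_{k−1}+3, [2]^{d_{k−1}−3}, c_{k−2}+3, …, [2]^{d_1−3}, c_0+2. Then the pair (B, A) is complementary. -/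
/-- The string `[2]^(c₀), d₁, [2]^(c₁), d₂, …, d_k, [2]^(c_k)`, where `[2]^m`
denotes `m` copies of `2`. -/
def listA (c d : ℕ → ℤ) (k : ℕ) : List ℤ :=
  List.replicate (c 0).toNat 2 ++
    (List.range k).flatMap fun i => d (i + 1) :: List.replicate (c (i + 1)).toNat 2

/-- The string `c_k+2, [2]^(d_k−3), c_k₋₁+3, [2]^(d_k₋₁−3), c_k₋₂+3, …, [2]^(d₁−3), c₀+2`. -/
def listB (c d : ℕ → ℤ) (k : ℕ) : List ℤ :=
  (c k + 2) :: (List.range k).reverse.flatMap fun i =>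
    List.replicate (d (i + 1) - 3).toNat 2 ++ [c i + if i = 0 then 2 else 3]

lemma lsteps (n : ℕ) (b : ℤ) (B A : List ℤ) :
    Relation.ReflTransGen TwoFinalExp (b :: B, A)
      ((b + n) :: B, A ++ List.replicate n 2) := by
  induction n with
  | zero => simpa using Relation.ReflTransGen.refl
  | succ n ih =>
      refine ih.tail (Or.inl ⟨b + n, B, A ++ List.replicate n 2, rfl, ?_⟩)
      rw [List.replicate_succ', ← List.append_assoc]
      push_cast
      ring_nf

lemma rsteps (n : ℕ) (a : ℤ) (B A : List ℤ) :
    Relation.ReflTransGen TwoFinalExp (B, A ++ [a])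
      (List.replicate n 2 ++ B, A ++ [a + n]) := by
  induction n with
  | zero => simpa using Relation.ReflTransGen.refl
  | succ n ih =>
      refine ih.tail (Or.inr ⟨List.replicate n 2 ++ B, A, a + n, rfl, ?_⟩)
      rw [List.replicate_succ, List.cons_append]
      push_cast
      ring_nf

lemma firstblock (c' d' : ℤ) (hc : 0 ≤ c') (hd : 3 ≤ d') (B A : List ℤ) :
    Relation.ReflTransGen TwoFinalExp (B, A ++ [2])
      ((c' + 2) :: (List.replicate (d' - 3).toNat 2 ++ B),
        A ++ d' :: List.replicate c'.toNat 2) := by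
  have h1 := rsteps (d' - 2).toNat 2 B A
  have h2 := lsteps c'.toNat 2 (List.replicate (d' - 3).toNat 2 ++ B) (A ++ [d'])
  have e1 : (d' - 2).toNat = (d' - 3).toNat + 1 := by omega
  have e2 : (2 : ℤ) + (d' - 2).toNat = d' := by
    have := Int.toNat_of_nonneg (show 0 ≤ d' - 2 by omega); omega
  have e3 : (2 : ℤ) + c'.toNat = c' + 2 := by
    have := Int.toNat_of_nonneg hc; omega
  rw [e2, e1, List.replicate_succ] at h1
  rw [e3, List.append_assoc] at h2
  exact h1.trans h2

lemma listA_succ (c d : ℕ → ℤ) (k : ℕ) :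
    listA c d (k + 1) = listA c d k ++ d (k + 1) :: List.replicate (c (k + 1)).toNat 2 := by
  simp [listA, List.range_succ]

lemma listB_eq (c d : ℕ → ℤ) (k : ℕ) (hk : 1 ≤ k) :
    listB c d (k + 1) = (c (k + 1) + 2) ::
      (List.replicate (d (k + 1) - 3).toNat 2 ++
        (c k + 3) :: ((List.range k).reverse.flatMap fun i =>
          List.replicate (d (i + 1) - 3).toNat 2 ++ [c i + if i = 0 then 2 else 3])) := by
  have : k ≠ 0 := by omega
  simp [listB, List.range_succ, this]

/-- Let `k ≥ 1`, let `c₀,…,c_k` be integers with `cᵢ ≥ 0` and `d₁,…,d_k` integers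
with `dᵢ ≥ 3`.  With `A = [2]^(c₀), d₁, [2]^(c₁), …, d_k, [2]^(c_k)` and
`B = c_k+2, [2]^(d_k−3), c_k₋₁+3, …, [2]^(d₁−3), c₀+2`, the pair `(B, A)` is
complementary. -/
theorem stmt15 (k : ℕ) (hk : 1 ≤ k) (c d : ℕ → ℤ)
    (hc : ∀ i ≤ k, 0 ≤ c i) (hd : ∀ i, 1 ≤ i → i ≤ k → 3 ≤ d i) :
    Complementary (listB c d k) (listA c d k) := by
  induction k, hk using Nat.le_induction with
  | base =>
      have h0 := lsteps (c 0).toNat 2 [] [2]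
      have h1 := firstblock (c 1) (d 1) (hc 1 le_rfl) (hd 1 le_rfl le_rfl)
        [2 + ((c 0).toNat : ℤ)] (List.replicate (c 0).toNat 2)
      have e0 : ([2] : List ℤ) ++ List.replicate (c 0).toNat 2
          = List.replicate (c 0).toNat 2 ++ [2] := by
        rw [List.singleton_append, ← List.replicate_succ, List.replicate_succ']
      rw [e0] at h0
      have e1 : (2 : ℤ) + (c 0).toNat = c 0 + 2 := by
        have := Int.toNat_of_nonneg (hc 0 (by omega)); omega
      rw [e1] at h0 h1
      have := h0.trans h1
      have eB : listB c d 1 = (c 1 + 2) :: (List.replicate (d 1 - 3).toNat 2 ++ [c 0 + 2]) := by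
        simp [listB, List.range_succ]
      have eA : listA c d 1 = List.replicate (c 0).toNat 2 ++ d 1 :: List.replicate (c 1).toNat 2 := by
        simp [listA, List.range_succ]
      unfold Complementary
      rw [eB, eA]
      exact this
  | succ k hk ih =>
      have ihh := ih (fun i hi => hc i (hi.trans (Nat.le_succ k)))
        (fun i h1 h2 => hd i h1 (h2.trans (Nat.le_succ k)))
      set T := (List.range k).reverse.flatMap fun i =>
          List.replicate (d (i + 1) - 3).toNat 2 ++ [c i + if i = 0 then 2 else 3] with hT
      have hB : listB c d k = (c k + 2) :: T := rfl
      have step1 : TwoFinalExp (listB c d k, listA c d k)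
          ((c k + 3) :: T, listA c d k ++ [2]) := by
        refine Or.inl ⟨c k + 2, T, listA c d k, hB ▸ rfl, ?_⟩
        rw [show c k + 2 + 1 = c k + 3 by ring]
      have h1 := firstblock (c (k + 1)) (d (k + 1)) (hc (k + 1) le_rfl)
        (hd (k + 1) (by omega) le_rfl) ((c k + 3) :: T) (listA c d k)
      have := (ihh.tail step1).trans h1
      unfold Complementary
      rw [listB_eq c d k hk, listA_succ]
      exact this
end

section
/- (Riemenschneider point rule.) Let p > q > 0 be coprime integers and write p/q = [a_1,…,a_n]^- with all a_i ≥ 2, where the string (a_1,…,a_n) equals the concatenation [2]^{c_0}, d_1, [2]^{c_1}, d_2, …, d_k, [2]^{c_k} with k ≥ 0, c_i ≥ 0 and d_i ≥ 3 ([2]^m denoting m copies of 2). If k = 0, then p/(p−q) = [c_0+1]^-. If k ≥ 1, then p/(p−q) = [c_0+2, [2]^{d_1−3}, c_1+3, [2]^{d_2−3}, c_2+3, …, [2]^{d_k−3}, c_k+2]^-. -/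
/-- The string `c₀+2, [2]^(d₁−3), c₁+3, [2]^(d₂−3), c₂+3, …, [2]^(d_k−3), c_k+2`. -/
def listBrev (c d : ℕ → ℤ) (k : ℕ) : List ℤ :=
  (c 0 + 2) :: (List.range k).flatMap fun i =>
    List.replicate (d (i + 1) - 3).toNat 2 ++ [c (i + 1) + if i + 1 = k then 2 else 3]

namespace Riemen

open Matrix

/-- the elementary matrix of one continued fraction step -/
def M (a : ℤ) : Matrix (Fin 2) (Fin 2) ℤ := !![a, -1; 1, 0]

/-- product of step matrices along a list -/
def P (l : List ℤ) : Matrix (Fin 2) (Fin 2) ℤ := (l.map M).prod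

@[simp] lemma P_nil : P [] = 1 := rfl

@[simp] lemma P_cons (a : ℤ) (l : List ℤ) : P (a :: l) = M a * P l := by
  simp [P]

@[simp] lemma P_append (l m : List ℤ) : P (l ++ m) = P l * P m := by
  simp [P]

lemma P_entries (l : List ℤ) :
    P l 0 0 = negCont l ∧ (l ≠ [] → P l 1 0 = negCont l.tail) := by
  induction l with
  | nil => simp [negCont]
  | cons a l ih =>
    have h00 : P (a :: l) 0 0 = a * P l 0 0 + (-1) * P l 1 0 := by
      simp [P_cons, M, Matrix.mul_apply, Fin.sum_univ_two]
    have h10 : P (a :: l) 1 0 = P l 0 0 := by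
      simp [P_cons, M, Matrix.mul_apply, Fin.sum_univ_two]
    cases l with
    | nil =>
      constructor
      · simp only [h00]; simp [negCont, P_nil, Matrix.one_apply]
      · intro _; simp only [h10]; simp [negCont, P_nil, Matrix.one_apply]
    | cons b m =>
      refine ⟨?_, fun _ => ?_⟩
      · rw [h00, ih.1, ih.2 (by simp)]
        show _ = negCont (a :: b :: m)
        rw [negCont]
        ring_nf
        rfl
      · rw [h10, ih.1]; rfl

lemma P_det (l : List ℤ) : (P l).det = 1 := by
  induction l with
  | nil => simp
  | cons a l ih =>
    rw [P_cons, Matrix.det_mul, ih, mul_one]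
    simp [M, Matrix.det_fin_two_of]

/-- `M 2 ^ n` -/
def Rep (n : ℕ) : Matrix (Fin 2) (Fin 2) ℤ := !![(n : ℤ) + 1, -(n : ℤ); (n : ℤ), 1 - (n : ℤ)]

lemma P_replicate (n : ℕ) : P (List.replicate n 2) = Rep n := by
  induction n with
  | zero =>
    ext i j
    fin_cases i <;> fin_cases j <;> simp [Rep, Matrix.one_apply]
  | succ n ih =>
    rw [List.replicate_succ, P_cons, ih]
    ext i j
    fin_cases i <;> fin_cases j <;>
      simp [M, Rep, Matrix.mul_apply, Fin.sum_univ_two] <;> push_cast <;> ring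

def X : Matrix (Fin 2) (Fin 2) ℤ := !![1, 0; 1, -1]
def Y : Matrix (Fin 2) (Fin 2) ℤ := !![1, -1; 0, -1]
def U : Matrix (Fin 2) (Fin 2) ℤ := !![1, 1; 0, 1]

lemma key1 (x : ℤ) (n : ℕ) (h : (n : ℤ) = x) : M (x + 1) = X * Rep n * Y := by
  subst h
  ext i j
  fin_cases i <;> fin_cases j <;>
    simp [M, Rep, X, Y, Matrix.mul_apply, Fin.sum_univ_two] <;> ring

lemma key2 (cv dv : ℤ) (m r : ℕ) (hm : (m : ℤ) = dv - 3) (hr : (r : ℤ) = cv) :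
    M (cv + 2) * Rep m * U * X = X * Rep r * M dv := by
  ext i j
  fin_cases i <;> fin_cases j <;>
    simp [M, Rep, X, Y, U, Matrix.mul_apply, Fin.sum_univ_two, hm, hr] <;> ring

lemma MU (h : ℤ) : M (h + 1) = U * M h := by
  ext i j
  fin_cases i <;> fin_cases j <;>
    simp [M, U, Matrix.mul_apply, Fin.sum_univ_two] <;> ring

/-- the dual string, with the `k = 0` special case included -/
def Bfull (c d : ℕ → ℤ) (k : ℕ) : List ℤ :=
  if k = 0 then [c 0 + 1] else listBrev c d k

lemma Bfull_ne_nil (c d : ℕ → ℤ) (k : ℕ) : Bfull c d k ≠ [] := by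
  unfold Bfull listBrev
  split <;> simp

lemma listA_succ (c d : ℕ → ℤ) (k : ℕ) :
    listA c d (k + 1) = List.replicate (c 0).toNat 2 ++
      d 1 :: listA (fun i => c (i + 1)) (fun i => d (i + 1)) k := by
  unfold listA
  rw [List.range_succ_eq_map, List.flatMap_cons, List.flatMap_map]
  simp [Function.comp_def]

lemma listBrev_succ (c d : ℕ → ℤ) (k : ℕ) :
    ∃ h t, Bfull (fun i => c (i + 1)) (fun i => d (i + 1)) k = h :: t ∧
      listBrev c d (k + 1) = (c 0 + 2) ::
        (List.replicate (d 1 - 3).toNat 2 ++ (h + 1) :: t) := by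
  unfold listBrev Bfull
  rcases Nat.eq_zero_or_pos k with hk | hk
  · subst hk
    refine ⟨c 1 + 1, [], by simp, ?_⟩
    have h2 : c 1 + 1 + 1 = c 1 + 2 := by ring
    simp [List.range_succ, h2]
  · refine ⟨c 1 + 2, (List.range k).flatMap fun i =>
      List.replicate (d (i + 1 + 1) - 3).toNat 2 ++
        [c (i + 1 + 1) + if i + 1 = k then 2 else 3], ?_, ?_⟩
    · rw [if_neg (by omega), listBrev]
    · rw [List.range_succ_eq_map, List.flatMap_cons, List.flatMap_map]
      have h1 : (1 : ℕ) ≠ k + 1 := by omega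
      simp only [Function.comp_def, if_neg h1]
      have : ∀ i : ℕ, (i + 1 + 1 = k + 1) = (i + 1 = k) := by
        intro i; simp only [eq_iff_iff]; omega
      simp only [this]
      simp
      ring

lemma main_ind : ∀ (k : ℕ) (c d : ℕ → ℤ), (∀ i ≤ k, 0 ≤ c i) →
    (∀ i, 1 ≤ i → i ≤ k → 3 ≤ d i) →
    P (Bfull c d k) = X * P (listA c d k) * Y := by
  intro k
  induction k with
  | zero =>
    intro c d hc _
    have hc0 : ((c 0).toNat : ℤ) = c 0 := Int.toNat_of_nonneg (hc 0 le_rfl)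
    unfold Bfull listA
    simp only [if_pos rfl, List.range_zero, List.flatMap_nil, List.append_nil]
    rw [P_replicate, ← key1 (c 0) _ hc0]
    simp [P]
  | succ k ih =>
    intro c d hc hd
    obtain ⟨h, t, hB, hsucc⟩ := listBrev_succ c d k
    have hc0 : ((c 0).toNat : ℤ) = c 0 := Int.toNat_of_nonneg (hc 0 (by omega))
    have hd1 : ((d 1 - 3).toNat : ℤ) = d 1 - 3 :=
      Int.toNat_of_nonneg (by have := hd 1 le_rfl (by omega); omega)
    have hBP : P (Bfull c d (k + 1)) =
        M (c 0 + 2) * Rep (d 1 - 3).toNat * (U * P (Bfull (fun i => c (i + 1)) (fun i => d (i + 1)) k)) := by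
      rw [Bfull, if_neg (Nat.succ_ne_zero k), hsucc, P_cons, P_append, P_cons,
        P_replicate, hB, P_cons, MU]
      noncomm_ring
    rw [hBP, ih _ _ (fun i hi => hc (i + 1) (by omega)) (fun i h1 h2 => hd (i + 1) (by omega) (by omega))]
    rw [listA_succ, P_append, P_cons, P_replicate]
    have : M (c 0 + 2) * Rep (d 1 - 3).toNat * (U * (X * P (listA (fun i => c (i + 1)) (fun i => d (i + 1)) k) * Y)) =
        (M (c 0 + 2) * Rep (d 1 - 3).toNat * U * X) * P (listA (fun i => c (i + 1)) (fun i => d (i + 1)) k) * Y := by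
      noncomm_ring
    rw [this, key2 (c 0) (d 1) _ _ hd1 hc0]
    noncomm_ring

lemma XY_entries (N : Matrix (Fin 2) (Fin 2) ℤ) :
    (X * N * Y) 0 0 = N 0 0 ∧ (X * N * Y) 1 0 = N 0 0 - N 1 0 := by
  constructor <;>
    simp [X, Y, Matrix.mul_apply, Fin.sum_univ_two, Matrix.vecMul, dotProduct] <;> ring

lemma negCont_pos : ∀ l : List ℤ, (∀ x ∈ l, 2 ≤ x) → l ≠ [] →
    0 < negCont l.tail ∧ negCont l.tail < negCont l := by
  intro l
  induction l with
  | nil => simp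
  | cons a m ih =>
    intro hmem _
    have ha : 2 ≤ a := hmem a (by simp)
    cases m with
    | nil => simp [negCont]; omega
    | cons b m' =>
      obtain ⟨h1, h2⟩ := ih (fun x hx => hmem x (by simp [hx])) (by simp)
      have hK : negCont (a :: b :: m') = a * negCont (b :: m') - negCont m' := rfl
      constructor
      · simp only [List.tail_cons]; omega
      · simp only [List.tail_cons] at *
        nlinarith

end Riemen

/-- Riemenschneider point rule.  Let `p > q > 0` be coprime with
`p/q = [a₁,…,aₙ]⁻`, all `aᵢ ≥ 2`, where `(a₁,…,aₙ)` is the concatenation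
`[2]^(c₀), d₁, [2]^(c₁), d₂, …, d_k, [2]^(c_k)` with `k ≥ 0`, `cᵢ ≥ 0`, `dᵢ ≥ 3`.
If `k = 0` then `p/(p−q) = [c₀+1]⁻`, and if `k ≥ 1` then
`p/(p−q) = [c₀+2, [2]^(d₁−3), c₁+3, [2]^(d₂−3), …, [2]^(d_k−3), c_k+2]⁻`.
(Here `[b₁,…,bₘ]⁻ = K(b₁,…,bₘ)/K(b₂,…,bₘ)`.) -/
theorem stmt16 (p q : ℤ) (hco : IsCoprime p q) (hqp : q < p) (hq : 0 < q)
    (k : ℕ) (c d : ℕ → ℤ)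
    (hc : ∀ i ≤ k, 0 ≤ c i) (hd : ∀ i, 1 ≤ i → i ≤ k → 3 ≤ d i)
    (hA : (p : ℚ) / (q : ℚ) =
      (negCont (listA c d k) : ℚ) / (negCont (listA c d k).tail : ℚ)) :
    (k = 0 → (p : ℚ) / ((p : ℚ) - (q : ℚ)) =
      (negCont [c 0 + 1] : ℚ) / (negCont (([c 0 + 1] : List ℤ)).tail : ℚ)) ∧
    (1 ≤ k → (p : ℚ) / ((p : ℚ) - (q : ℚ)) =
      (negCont (listBrev c d k) : ℚ) / (negCont (listBrev c d k).tail : ℚ)) := by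
  open Riemen in
  -- the string A
  set A := listA c d k with hAdef
  have hqne : (q : ℚ) ≠ 0 := Int.cast_ne_zero.mpr (by omega)
  -- A is nonempty
  have hAne : A ≠ [] := by
    intro hnil
    rw [hnil] at hA
    simp [negCont] at hA
    rw [div_eq_one_iff_eq hqne] at hA
    have : p = q := by exact_mod_cast hA
    omega
  -- entries of A are ≥ 2
  have hmem : ∀ x ∈ A, 2 ≤ x := by
    intro x hx
    rw [hAdef, listA] at hx
    simp only [List.mem_append, List.mem_replicate, List.mem_flatMap, List.mem_range,
      List.mem_cons] at hx
    rcases hx with ⟨_, rfl⟩ | ⟨i, hi, rfl | ⟨-, rfl⟩⟩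
    · norm_num
    · have := hd (i + 1) (by omega) (by omega); omega
    · norm_num
  -- continuants of A
  set p' := negCont A with hp'
  set q' := negCont A.tail with hq'
  have hPA0 : P A 0 0 = p' := (P_entries A).1
  have hPA1 : P A 1 0 = q' := (P_entries A).2 hAne
  obtain ⟨hq'pos, hq'lt⟩ := negCont_pos A hmem hAne
  -- coprimality of p', q' from the determinant
  have hdet : P A 0 0 * P A 1 1 - P A 0 1 * P A 1 0 = 1 := by
    have := P_det A
    rwa [Matrix.det_fin_two] at this
  have hcop' : IsCoprime p' q' := by
    refine ⟨P A 1 1, -(P A 0 1), ?_⟩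
    rw [← hPA0, ← hPA1]; ring_nf; linarith [hdet]
  -- from hA : p * q' = p' * q
  have hq'ne : (q' : ℚ) ≠ 0 := Int.cast_ne_zero.mpr (by omega)
  have hcross : p * q' = p' * q := by
    rw [div_eq_div_iff hqne hq'ne] at hA
    exact_mod_cast hA
  -- p = p' and q = q'
  have hpp' : p' = p := by
    have h1 : p ∣ p' := hco.dvd_of_dvd_mul_right ⟨q', by linarith [hcross]⟩
    have h2 : p' ∣ p := hcop'.dvd_of_dvd_mul_right ⟨q, by linarith [hcross]⟩
    exact Int.dvd_antisymm (by omega) (by omega) h2 h1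
  have hqq' : q' = q := by
    have hpne : p ≠ 0 := by omega
    have : p * q' = p * q := by rw [hcross, hpp']
    exact mul_left_cancel₀ hpne this
  -- the dual string
  have hmain := main_ind k c d hc hd
  rw [← hAdef] at hmain
  obtain ⟨e0, e1⟩ := XY_entries (P A)
  have hBne := Bfull_ne_nil c d k
  have hB0 : negCont (Bfull c d k) = p := by
    rw [← (P_entries _).1, hmain, e0, hPA0, hpp']
  have hB1 : negCont (Bfull c d k).tail = p - q := by
    rw [← (P_entries _).2 hBne, hmain, e1, hPA0, hPA1, hpp', hqq']
  have hpq : ((p : ℚ) - (q : ℚ)) = ((p - q : ℤ) : ℚ) := by push_cast; ring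
  constructor
  · intro hk
    subst hk
    rw [Bfull, if_pos rfl] at hB0 hB1
    simp only [List.tail_cons] at hB1 ⊢
    rw [hB0, hB1, hpq, ← hB1]
  · intro hk
    rw [Bfull, if_neg (by omega)] at hB0 hB1
    rw [hB0, hB1, hpq]
end
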